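/- arXiv:2206.13679 — 12 statements merged into one kernel-verified Lean document; each statement's English description precedes it below -/
import Mathlib

section
/- Let ρ = (ρ_α)_{α∈I} be a family of risk measures on a convex cone X of random variables containing all constants, with ρ_α(X) decreasing in α, and suppose there exists γ ∈ ℝ such that every ρ_β, β ∈ I, satisfies [PH]_γ, i.e. ρ_β(λX) = λ^γ ρ_β(X) for all λ > 0 and X ∈ X. Then for each α ∈ I the diversification quotient DQ^ρ_α satisfies scale invariance [SI]: DQ^ρ_α(λX) = DQ^ρ_α(X) for all λ > 0 and X ∈ X^n. -/
/-!
Under `[PH]_γ`, scaling every `X_i` by `l > 0` multiplies both sides of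
`ρ_β(X_1 + ⋯ + X_n) ≤ ρ_α(X_1) + ⋯ + ρ_α(X_n)` by `l ^ γ > 0`, so the set of admissible levels `β`,
and with it `α*`, does not change.
-/

open MeasureTheory Filter

open scoped Classical in
/-- The diversification quotient `DQ^ρ_α` built from the family `ρ = (ρ_β)_{β ∈ I}`,
with index set `I = (0, ᾱ)` and the convention `inf ∅ = ᾱ`. -/
noncomputable def DQ {Ω : Type*} {n : ℕ} (αbar : EReal) (ρ : ℝ → (Ω → ℝ) → ℝ)
    (α : ℝ) (X : Fin n → Ω → ℝ) : EReal :=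
  (if ({β : ℝ | 0 < β ∧ (β : EReal) < αbar ∧
        ρ β (fun ω => ∑ i, X i ω) ≤ ∑ i, ρ α (X i)}).Nonempty
    then ((sInf {β : ℝ | 0 < β ∧ (β : EReal) < αbar ∧
        ρ β (fun ω => ∑ i, X i ω) ≤ ∑ i, ρ α (X i)} : ℝ) : EReal)
    else αbar) * ((α⁻¹ : ℝ) : EReal)

namespace DQ

variable {Ω : Type*} {n : ℕ}

/-- The levels `β ∈ I` whose infimum is `α*`. -/
def levels (αbar : EReal) (ρ : ℝ → (Ω → ℝ) → ℝ) (α : ℝ) (X : Fin n → Ω → ℝ) : Set ℝ :=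
  {β : ℝ | 0 < β ∧ (β : EReal) < αbar ∧ ρ β (fun ω => ∑ i, X i ω) ≤ ∑ i, ρ α (X i)}

theorem congr_of_levels_eq {αbar : EReal} {ρ : ℝ → (Ω → ℝ) → ℝ} {α : ℝ}
    {X Y : Fin n → Ω → ℝ} (h : levels αbar ρ α X = levels αbar ρ α Y) :
    DQ αbar ρ α X = DQ αbar ρ α Y := by
  unfold DQ
  unfold levels at h
  rw [h]

theorem levels_smul_eq {αbar : EReal} {ρ : ℝ → (Ω → ℝ) → ℝ} {α : ℝ} {X : Fin n → Ω → ℝ}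
    {l c : ℝ} (hc : 0 < c)
    (hsum : ∀ β : ℝ, 0 < β → (β : EReal) < αbar →
      ρ β (l • fun ω => ∑ i, X i ω) = c * ρ β (fun ω => ∑ i, X i ω))
    (hparts : ∀ i, ρ α (l • X i) = c * ρ α (X i)) :
    levels αbar ρ α (fun i => l • X i) = levels αbar ρ α X := by
  have hagg : (fun ω => ∑ i, (l • X i) ω) = l • fun ω => ∑ i, X i ω := by
    funext ω
    simp [Finset.mul_sum]
  ext β
  simp only [levels, Set.mem_ofPred_eq, hagg, hparts, ← Finset.mul_sum]
  refine and_congr_right fun hβ => and_congr_right fun hβI => ?_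
  rw [hsum β hβ hβI, mul_le_mul_iff_right₀ hc]

end DQ

theorem sum_fun_mem_of_add_mem {Ω ι : Type*} {𝒳 : Set (Ω → ℝ)}
    (hadd : ∀ X ∈ 𝒳, ∀ Y ∈ 𝒳, X + Y ∈ 𝒳) (hzero : (fun _ : Ω => (0 : ℝ)) ∈ 𝒳)
    (s : Finset ι) {X : ι → Ω → ℝ} (hX : ∀ i, X i ∈ 𝒳) :
    (fun ω => ∑ i ∈ s, X i ω) ∈ 𝒳 := by
  let M : AddSubmonoid (Ω → ℝ) := ⟨⟨𝒳, fun hX hY => hadd _ hX _ hY⟩, hzero⟩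
  rw [← Finset.sum_fn]
  exact M.sum_mem fun i _ => hX i

theorem stmt_2_general {Ω : Type*} (𝒳 : Set (Ω → ℝ))
    (hadd : ∀ X ∈ 𝒳, ∀ Y ∈ 𝒳, X + Y ∈ 𝒳)
    (hconst : ∀ c : ℝ, (fun _ : Ω => c) ∈ 𝒳)
    (αbar : EReal)
    (ρ : ℝ → (Ω → ℝ) → ℝ)
    (γ : ℝ)
    (hPH : ∀ β : ℝ, 0 < β → (β : EReal) < αbar → ∀ Y ∈ 𝒳, ∀ l : ℝ, 0 < l →
      ρ β (l • Y) = l ^ γ * ρ β Y)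
    (α : ℝ) (hα : 0 < α) (hαI : (α : EReal) < αbar)
    (n : ℕ) (X : Fin n → Ω → ℝ) (hX : ∀ i, X i ∈ 𝒳)
    (l : ℝ) (hl : 0 < l) :
    DQ αbar ρ α (fun i => l • X i) = DQ αbar ρ α X := by
  have hS : (fun ω => ∑ i, X i ω) ∈ 𝒳 := sum_fun_mem_of_add_mem hadd (hconst 0) _ hX
  refine DQ.congr_of_levels_eq (DQ.levels_smul_eq (Real.rpow_pos_of_pos hl γ) ?_ ?_)
  · exact fun β hβ hβI => hPH β hβ hβI _ hS l hl
  · exact fun i => hPH α hα hαI _ (hX i) l hl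

/-- if every `ρ_β` is positively homogeneous of degree `γ` ([PH]_γ), then
`DQ^ρ_α` is scale invariant [SI]. -/
theorem stmt_2 {Ω : Type*} (𝒳 : Set (Ω → ℝ))
    (hadd : ∀ X ∈ 𝒳, ∀ Y ∈ 𝒳, X + Y ∈ 𝒳)
    (hsmul : ∀ X ∈ 𝒳, ∀ c : ℝ, 0 < c → c • X ∈ 𝒳)
    (hconst : ∀ c : ℝ, (fun _ : Ω => c) ∈ 𝒳)
    (αbar : EReal) (hαbar : 0 < αbar)
    (ρ : ℝ → (Ω → ℝ) → ℝ)
    (hdec : ∀ Y ∈ 𝒳, ∀ β γ' : ℝ, 0 < β → (β : EReal) < αbar → 0 < γ' → (γ' : EReal) < αbar →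
      β ≤ γ' → ρ γ' Y ≤ ρ β Y)
    (γ : ℝ)
    (hPH : ∀ β : ℝ, 0 < β → (β : EReal) < αbar → ∀ Y ∈ 𝒳, ∀ l : ℝ, 0 < l →
      ρ β (l • Y) = l ^ γ * ρ β Y)
    (α : ℝ) (hα : 0 < α) (hαI : (α : EReal) < αbar)
    (n : ℕ) (hn : 0 < n) (X : Fin n → Ω → ℝ) (hX : ∀ i, X i ∈ 𝒳)
    (l : ℝ) (hl : 0 < l) :
    DQ αbar ρ α (fun i => l • X i) = DQ αbar ρ α X :=
  stmt_2_general 𝒳 hadd hconst αbar ρ γ hPH α hα hαI n X hX l hl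
end

section
/- Let ρ = (ρ_α)_{α∈I} be a family of risk measures on a convex cone X of random variables containing all constants, with ρ_α(X) decreasing in α, and suppose there exists m ∈ ℝ such that every ρ_β, β ∈ I, satisfies [CA]_m, i.e. ρ_β(X+c) = ρ_β(X) + mc for all c ∈ ℝ and X ∈ X. Then for each α ∈ I the diversification quotient DQ^ρ_α satisfies location invariance [LI]: DQ^ρ_α(X+c) = DQ^ρ_α(X) for all constant vectors c ∈ ℝ^n and X ∈ X^n. -/
open MeasureTheory Filter

theorem DQ_congr {Ω : Type*} {n : ℕ} {αbar : EReal} {ρ : ℝ → (Ω → ℝ) → ℝ} {α : ℝ}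
    {X Y : Fin n → Ω → ℝ}
    (h : ∀ β : ℝ, 0 < β → (β : EReal) < αbar →
      (ρ β (fun ω => ∑ i, Y i ω) ≤ ∑ i, ρ α (Y i) ↔
        ρ β (fun ω => ∑ i, X i ω) ≤ ∑ i, ρ α (X i))) :
    DQ αbar ρ α Y = DQ αbar ρ α X := by
  have hset : {β : ℝ | 0 < β ∧ (β : EReal) < αbar ∧
        ρ β (fun ω => ∑ i, Y i ω) ≤ ∑ i, ρ α (Y i)} =
      {β : ℝ | 0 < β ∧ (β : EReal) < αbar ∧
        ρ β (fun ω => ∑ i, X i ω) ≤ ∑ i, ρ α (X i)} :=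
    Set.ext fun β => and_congr_right fun hβ => and_congr_right (h β hβ)
  unfold DQ
  rw [hset]

theorem sum_add_const_apply {Ω M : Type*} [AddCommMonoid M] {n : ℕ}
    (X : Fin n → Ω → M) (c : Fin n → M) :
    (fun ω => ∑ i, (X i + fun _ => c i : Ω → M) ω) =
      (fun ω => ∑ i, X i ω) + fun _ => ∑ i, c i := by
  funext ω
  simp only [Pi.add_apply, Finset.sum_add_distrib]

theorem sum_apply_mem {Ω M : Type*} [AddCommMonoid M] {n : ℕ} {𝒳 : Set (Ω → M)}
    (hadd : ∀ X ∈ 𝒳, ∀ Y ∈ 𝒳, X + Y ∈ 𝒳) (hzero : (0 : Ω → M) ∈ 𝒳)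
    {X : Fin n → Ω → M} (hX : ∀ i, X i ∈ 𝒳) :
    (fun ω => ∑ i, X i ω) ∈ 𝒳 := by
  rw [← Finset.sum_fn]
  exact Finset.sum_induction _ (· ∈ 𝒳) (fun _ _ ha hb => hadd _ ha _ hb) hzero fun i _ => hX i

theorem stmt_3_general {Ω : Type*} (𝒳 : Set (Ω → ℝ))
    (hadd : ∀ X ∈ 𝒳, ∀ Y ∈ 𝒳, X + Y ∈ 𝒳)
    (hconst : ∀ c : ℝ, (fun _ : Ω => c) ∈ 𝒳)
    (αbar : EReal)
    (ρ : ℝ → (Ω → ℝ) → ℝ)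
    (m : ℝ)
    (hCA : ∀ β : ℝ, 0 < β → (β : EReal) < αbar → ∀ Y ∈ 𝒳, ∀ c : ℝ,
      ρ β (Y + (fun _ => c)) = ρ β Y + m * c)
    (α : ℝ) (hα : 0 < α) (hαI : (α : EReal) < αbar)
    (n : ℕ) (X : Fin n → Ω → ℝ) (hX : ∀ i, X i ∈ 𝒳)
    (c : Fin n → ℝ) :
    DQ αbar ρ α (fun i => X i + (fun _ => c i)) = DQ αbar ρ α X := by
  have hS : (fun ω => ∑ i, X i ω) ∈ 𝒳 := sum_apply_mem hadd (hconst 0) hX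
  -- both sides of the defining inequality shift by `m * ∑ i, c i`
  have hrhs : ∑ i, ρ α (X i + fun _ => c i) = ∑ i, ρ α (X i) + m * ∑ i, c i := by
    simp only [hCA α hα hαI _ (hX _), Finset.sum_add_distrib, Finset.mul_sum]
  refine DQ_congr fun β hβ hβI => ?_
  rw [sum_add_const_apply, hCA β hβ hβI _ hS, hrhs]
  exact add_le_add_iff_right _

/-- if every `ρ_β` satisfies constant additivity with slope `m` ([CA]_m), then
`DQ^ρ_α` is location invariant [LI]. -/
theorem stmt_3 {Ω : Type*} (𝒳 : Set (Ω → ℝ))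
    (hadd : ∀ X ∈ 𝒳, ∀ Y ∈ 𝒳, X + Y ∈ 𝒳)
    (hsmul : ∀ X ∈ 𝒳, ∀ c : ℝ, 0 < c → c • X ∈ 𝒳)
    (hconst : ∀ c : ℝ, (fun _ : Ω => c) ∈ 𝒳)
    (αbar : EReal) (hαbar : 0 < αbar)
    (ρ : ℝ → (Ω → ℝ) → ℝ)
    (hdec : ∀ Y ∈ 𝒳, ∀ β γ : ℝ, 0 < β → (β : EReal) < αbar → 0 < γ → (γ : EReal) < αbar →
      β ≤ γ → ρ γ Y ≤ ρ β Y)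
    (m : ℝ)
    (hCA : ∀ β : ℝ, 0 < β → (β : EReal) < αbar → ∀ Y ∈ 𝒳, ∀ c : ℝ,
      ρ β (Y + (fun _ => c)) = ρ β Y + m * c)
    (α : ℝ) (hα : 0 < α) (hαI : (α : EReal) < αbar)
    (n : ℕ) (hn : 0 < n) (X : Fin n → Ω → ℝ) (hX : ∀ i, X i ∈ 𝒳)
    (c : Fin n → ℝ) :
    DQ αbar ρ α (fun i => X i + (fun _ => c i)) = DQ αbar ρ α X :=
  stmt_3_general 𝒳 hadd hconst αbar ρ m hCA α hα hαI n X hX c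
end

section
/- Let ρ = (ρ_α)_{α∈I} be a family of risk measures on a convex cone X of random variables containing all constants, with ρ_α(X) decreasing in α. If for a given α ∈ I the risk measure ρ_α is subadditive, i.e. ρ_α(X+Y) ≤ ρ_α(X) + ρ_α(Y) for all X, Y ∈ X, then the diversification quotient DQ^ρ_α takes values in [0,1]: 0 ≤ DQ^ρ_α(X) ≤ 1 for every X ∈ X^n. -/
open MeasureTheory Filter

/-- Once `α` itself lies in the set whose infimum is `α*`, that infimum lies in `[0, α]`. -/
theorem DQ_nonneg_and_le_one_of_le_sum {Ω : Type*} {n : ℕ} {αbar : EReal}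
    {ρ : ℝ → (Ω → ℝ) → ℝ} {α : ℝ} {X : Fin n → Ω → ℝ} (hα : 0 < α) (hαI : (α : EReal) < αbar)
    (hle : ρ α (fun ω => ∑ i, X i ω) ≤ ∑ i, ρ α (X i)) :
    0 ≤ DQ αbar ρ α X ∧ DQ αbar ρ α X ≤ 1 := by
  set S : Set ℝ := {β : ℝ | 0 < β ∧ (β : EReal) < αbar ∧
      ρ β (fun ω => ∑ i, X i ω) ≤ ∑ i, ρ α (X i)}
  have hαS : α ∈ S := ⟨hα, hαI, hle⟩
  have hinf_nonneg : 0 ≤ sInf S := le_csInf ⟨α, hαS⟩ fun β hβ => hβ.1.le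
  have hinf_le : sInf S ≤ α := csInf_le ⟨0, fun β hβ => hβ.1.le⟩ hαS
  have hDQ : DQ αbar ρ α X = ((sInf S * α⁻¹ : ℝ) : EReal) := by
    rw [DQ, if_pos ⟨α, hαS⟩, EReal.coe_mul]
  rw [hDQ]
  constructor
  · exact_mod_cast mul_nonneg hinf_nonneg (inv_nonneg.mpr hα.le)
  · exact_mod_cast mul_inv_le_one_of_le₀ hinf_le hα.le

theorem stmt_4_general {Ω : Type*} (𝒳 : Set (Ω → ℝ))
    (hadd : ∀ X ∈ 𝒳, ∀ Y ∈ 𝒳, X + Y ∈ 𝒳)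
    (αbar : EReal)
    (ρ : ℝ → (Ω → ℝ) → ℝ)
    (α : ℝ) (hα : 0 < α) (hαI : (α : EReal) < αbar)
    (hSA : ∀ U ∈ 𝒳, ∀ V ∈ 𝒳, ρ α (U + V) ≤ ρ α U + ρ α V)
    (n : ℕ) (hn : 0 < n) (X : Fin n → Ω → ℝ) (hX : ∀ i, X i ∈ 𝒳) :
    0 ≤ DQ αbar ρ α X ∧ DQ αbar ρ α X ≤ 1 := by
  refine DQ_nonneg_and_le_one_of_le_sum hα hαI ?_
  rw [← Finset.sum_fn]
  exact Finset.le_sum_nonempty_of_subadditive_on_pred (ρ α) (· ∈ 𝒳)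
    (fun U V hU hV => hSA U hU V hV) (fun U V hU hV => hadd U hU V hV) X Finset.univ
    (Finset.univ_nonempty_iff.mpr ⟨⟨0, hn⟩⟩) fun i _ => hX i

/-- if `ρ_α` is subadditive [SA], then `DQ^ρ_α` takes values in `[0,1]`. -/
theorem stmt_4 {Ω : Type*} (𝒳 : Set (Ω → ℝ))
    (hadd : ∀ X ∈ 𝒳, ∀ Y ∈ 𝒳, X + Y ∈ 𝒳)
    (hsmul : ∀ X ∈ 𝒳, ∀ c : ℝ, 0 < c → c • X ∈ 𝒳)
    (hconst : ∀ c : ℝ, (fun _ : Ω => c) ∈ 𝒳)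
    (αbar : EReal) (hαbar : 0 < αbar)
    (ρ : ℝ → (Ω → ℝ) → ℝ)
    (hdec : ∀ Y ∈ 𝒳, ∀ β γ : ℝ, 0 < β → (β : EReal) < αbar → 0 < γ → (γ : EReal) < αbar →
      β ≤ γ → ρ γ Y ≤ ρ β Y)
    (α : ℝ) (hα : 0 < α) (hαI : (α : EReal) < αbar)
    (hSA : ∀ U ∈ 𝒳, ∀ V ∈ 𝒳, ρ α (U + V) ≤ ρ α U + ρ α V)
    (n : ℕ) (hn : 0 < n) (X : Fin n → Ω → ℝ) (hX : ∀ i, X i ∈ 𝒳) :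
    0 ≤ DQ αbar ρ α X ∧ DQ αbar ρ α X ≤ 1 :=
  stmt_4_general 𝒳 hadd αbar ρ α hα hαI hSA n hn X hX
end

section
/- Let ρ = (ρ_α)_{α∈I} be a family of risk measures on a convex cone X of random variables containing all constants, with ρ_α(X) decreasing in α, let α ∈ I and X = (X_1,…,X_n) ∈ X^n, and assume ρ is left continuous and non-flat from the left at (α, X_1+⋯+X_n). Then ρ_α(X_1+⋯+X_n) < ρ_α(X_1)+⋯+ρ_α(X_n) if and only if DQ^ρ_α(X) < 1. -/
open MeasureTheory Filter

/-! `DQ^ρ_α(X) < 1` says exactly that some level `β < α` already satisfies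
`ρ_β(∑ X_i) ≤ ∑ ρ_α(X_i)`. Such a level exists under strict subadditivity at `α` by left
continuity, and conversely it forces strict subadditivity because `ρ` is non-flat from the
left. -/

theorem EReal.one_le_mul_inv_of_lt {α : ℝ} {a : EReal} (hα : 0 < α) (h : (α : EReal) < a) :
    1 ≤ a * ((α⁻¹ : ℝ) : EReal) := by
  calc (1 : EReal) = (α : EReal) * ((α⁻¹ : ℝ) : EReal) := by
        rw [← EReal.coe_mul, mul_inv_cancel₀ hα.ne', EReal.coe_one]
    _ ≤ a * ((α⁻¹ : ℝ) : EReal) :=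
        mul_le_mul_of_nonneg_right h.le (EReal.coe_nonneg.2 (inv_nonneg.2 hα.le))

theorem DQ_lt_one_iff {Ω : Type*} {n : ℕ} {αbar : EReal} {ρ : ℝ → (Ω → ℝ) → ℝ} {α : ℝ}
    (hα : 0 < α) (hαI : (α : EReal) < αbar) (X : Fin n → Ω → ℝ) :
    DQ αbar ρ α X < 1 ↔
      ∃ β, 0 < β ∧ β < α ∧ ρ β (fun ω => ∑ i, X i ω) ≤ ∑ i, ρ α (X i) := by
  classical
  set S : Set ℝ := {β : ℝ | 0 < β ∧ (β : EReal) < αbar ∧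
      ρ β (fun ω => ∑ i, X i ω) ≤ ∑ i, ρ α (X i)}
  have mem_S_of_lt {β : ℝ} (hβα : β < α) :
      β ∈ S ↔ 0 < β ∧ ρ β (fun ω => ∑ i, X i ω) ≤ ∑ i, ρ α (X i) :=
    and_congr_right fun _ => and_iff_right ((EReal.coe_lt_coe_iff.2 hβα).trans hαI)
  change (if S.Nonempty then ((sInf S : ℝ) : EReal) else αbar) * ((α⁻¹ : ℝ) : EReal) < 1 ↔ _
  split_ifs with hS
  · rw [← EReal.coe_mul, ← EReal.coe_one, EReal.coe_lt_coe_iff, ← div_eq_mul_inv,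
      div_lt_one hα, csInf_lt_iff ⟨0, fun _ hβ => hβ.1.le⟩ hS]
    constructor
    · rintro ⟨β, hβS, hβα⟩
      exact ⟨β, hβS.1, hβα, hβS.2.2⟩
    · rintro ⟨β, hβ, hβα, hρ⟩
      exact ⟨β, (mem_S_of_lt hβα).2 ⟨hβ, hρ⟩, hβα⟩
  · refine iff_of_false (EReal.one_le_mul_inv_of_lt hα hαI).not_gt ?_
    rintro ⟨β, hβ, hβα, hρ⟩
    exact hS ⟨β, (mem_S_of_lt hβα).2 ⟨hβ, hρ⟩⟩

theorem stmt_6_general {Ω : Type*}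
    (αbar : EReal)
    (ρ : ℝ → (Ω → ℝ) → ℝ)
    (α : ℝ) (hα : 0 < α) (hαI : (α : EReal) < αbar)
    (n : ℕ) (X : Fin n → Ω → ℝ)
    (hlc : Tendsto (fun β => ρ β (fun ω => ∑ i, X i ω)) (nhdsWithin α (Set.Iio α))
      (nhds (ρ α (fun ω => ∑ i, X i ω))))
    (hnf : ∀ β : ℝ, 0 < β → β < α →
      ρ α (fun ω => ∑ i, X i ω) < ρ β (fun ω => ∑ i, X i ω)) :
    ρ α (fun ω => ∑ i, X i ω) < ∑ i, ρ α (X i) ↔ DQ αbar ρ α X < 1 := by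
  rw [DQ_lt_one_iff hα hαI]
  constructor
  · intro h
    have hnear : ∀ᶠ β in nhdsWithin α (Set.Iio α),
        0 < β ∧ β < α ∧ ρ β (fun ω => ∑ i, X i ω) < ∑ i, ρ α (X i) :=
      (eventually_nhdsWithin_of_eventually_nhds (eventually_gt_nhds hα)).and
        (eventually_mem_nhdsWithin.and (hlc.eventually (eventually_lt_nhds h)))
    obtain ⟨β, hβ, hβα, hρ⟩ := hnear.exists
    exact ⟨β, hβ, hβα, hρ.le⟩
  · rintro ⟨β, hβ, hβα, hρ⟩
    exact (hnf β hβ hβα).trans_le hρ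

/-- diversification benefit exists iff `DQ^ρ_α < 1`
(Theorem on interpreting DQ, part (ii)). -/
theorem stmt_6 {Ω : Type*} (𝒳 : Set (Ω → ℝ))
    (hadd : ∀ X ∈ 𝒳, ∀ Y ∈ 𝒳, X + Y ∈ 𝒳)
    (hsmul : ∀ X ∈ 𝒳, ∀ c : ℝ, 0 < c → c • X ∈ 𝒳)
    (hconst : ∀ c : ℝ, (fun _ : Ω => c) ∈ 𝒳)
    (αbar : EReal) (hαbar : 0 < αbar)
    (ρ : ℝ → (Ω → ℝ) → ℝ)
    (hdec : ∀ Y ∈ 𝒳, ∀ β γ : ℝ, 0 < β → (β : EReal) < αbar → 0 < γ → (γ : EReal) < αbar →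
      β ≤ γ → ρ γ Y ≤ ρ β Y)
    (α : ℝ) (hα : 0 < α) (hαI : (α : EReal) < αbar)
    (n : ℕ) (hn : 0 < n) (X : Fin n → Ω → ℝ) (hX : ∀ i, X i ∈ 𝒳)
    (hlc : Tendsto (fun β => ρ β (fun ω => ∑ i, X i ω)) (nhdsWithin α (Set.Iio α))
      (nhds (ρ α (fun ω => ∑ i, X i ω))))
    (hnf : ∀ β : ℝ, 0 < β → β < α →
      ρ α (fun ω => ∑ i, X i ω) < ρ β (fun ω => ∑ i, X i ω)) :
    ρ α (fun ω => ∑ i, X i ω) < ∑ i, ρ α (X i) ↔ DQ αbar ρ α X < 1 :=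
  stmt_6_general αbar ρ α hα hαI n X hlc hnf
end

section
/- Let ρ = (ρ_α)_{α∈I} be a family of risk measures on a convex cone X of random variables containing all constants, with ρ_α(X) decreasing in α, let α ∈ I, and let X = (λ_1 X, …, λ_n X) for some X ∈ X and λ_1,…,λ_n ≥ 0. Assume ρ is left continuous and non-flat from the left at (α, λ_1 X + ⋯ + λ_n X), and that ρ_α satisfies positive homogeneity [PH]: ρ_α(λY) = λρ_α(Y) for all λ > 0 and Y ∈ X. Then DQ^ρ_α(X) = 1. -/
/-!
Positive homogeneity makes `ρ_α` additive on the portfolio `(λ₁X, …, λₙX)`, so the level `α`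
itself belongs to the set whose infimum is `α*`; non-flatness from the left excludes every
smaller level, hence `α* = α`.
-/

open MeasureTheory Filter

section PositivelyHomogeneous

variable {M : Type*} [AddCommGroup M] [Module ℝ M] {𝒳 : Set M} {φ : M → ℝ}

theorem map_zero_of_pos_homogeneous (hφ : ∀ Y ∈ 𝒳, ∀ c : ℝ, 0 < c → φ (c • Y) = c * φ Y)
    (h0 : (0 : M) ∈ 𝒳) : φ 0 = 0 := by
  have h := hφ 0 h0 2 two_pos
  rw [smul_zero] at h
  linarith

theorem map_smul_of_nonneg_of_pos_homogeneous
    (hφ : ∀ Y ∈ 𝒳, ∀ c : ℝ, 0 < c → φ (c • Y) = c * φ Y) (h0 : (0 : M) ∈ 𝒳)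
    {Z : M} (hZ : Z ∈ 𝒳) {c : ℝ} (hc : 0 ≤ c) : φ (c • Z) = c * φ Z := by
  rcases hc.eq_or_lt with rfl | hc
  · rw [zero_smul, zero_mul, map_zero_of_pos_homogeneous hφ h0]
  · exact hφ Z hZ c hc

theorem sum_map_smul_of_pos_homogeneous
    (hφ : ∀ Y ∈ 𝒳, ∀ c : ℝ, 0 < c → φ (c • Y) = c * φ Y) (h0 : (0 : M) ∈ 𝒳)
    {Z : M} (hZ : Z ∈ 𝒳) {ι : Type*} (s : Finset ι) {l : ι → ℝ} (hl : ∀ i, 0 ≤ l i) :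
    ∑ i ∈ s, φ (l i • Z) = φ ((∑ i ∈ s, l i) • Z) := by
  rw [map_smul_of_nonneg_of_pos_homogeneous hφ h0 hZ (Finset.sum_nonneg fun i _ => hl i),
    Finset.sum_mul]
  exact Finset.sum_congr rfl fun i _ => map_smul_of_nonneg_of_pos_homogeneous hφ h0 hZ (hl i)

end PositivelyHomogeneous

section DiversificationQuotient

variable {Ω : Type*} {n : ℕ} {αbar : EReal} {ρ : ℝ → (Ω → ℝ) → ℝ} {α : ℝ}
  {X : Fin n → Ω → ℝ}

theorem DQ_eq_one_of_isLeast (hα : 0 < α)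
    (h : IsLeast {β : ℝ | 0 < β ∧ (β : EReal) < αbar ∧
      ρ β (fun ω => ∑ i, X i ω) ≤ ∑ i, ρ α (X i)} α) :
    DQ αbar ρ α X = 1 := by
  unfold DQ
  rw [if_pos ⟨α, h.1⟩, h.csInf_eq, ← EReal.coe_mul, mul_inv_cancel₀ hα.ne']
  rfl

theorem DQ_eq_one_of_map_sum_eq_of_nonflat (hα : 0 < α) (hαI : (α : EReal) < αbar)
    (hsum : ρ α (fun ω => ∑ i, X i ω) = ∑ i, ρ α (X i))
    (hnf : ∀ β : ℝ, 0 < β → β < α →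
      ρ α (fun ω => ∑ i, X i ω) < ρ β (fun ω => ∑ i, X i ω)) :
    DQ αbar ρ α X = 1 :=
  DQ_eq_one_of_isLeast hα
    ⟨⟨hα, hαI, hsum.le⟩, fun β hβ =>
      not_lt.1 fun hβα => (hnf β hβ.1 hβα).not_ge (hsum ▸ hβ.2.2)⟩

end DiversificationQuotient

theorem stmt_7_general {Ω : Type*} (𝒳 : Set (Ω → ℝ))
    (hconst : ∀ c : ℝ, (fun _ : Ω => c) ∈ 𝒳)
    (αbar : EReal)
    (ρ : ℝ → (Ω → ℝ) → ℝ)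
    (α : ℝ) (hα : 0 < α) (hαI : (α : EReal) < αbar)
    (n : ℕ)
    (Z : Ω → ℝ) (hZ : Z ∈ 𝒳) (l : Fin n → ℝ) (hl : ∀ i, 0 ≤ l i)
    (X : Fin n → Ω → ℝ) (hXdef : ∀ i, X i = l i • Z)
    (hnf : ∀ β : ℝ, 0 < β → β < α →
      ρ α (fun ω => ∑ i, X i ω) < ρ β (fun ω => ∑ i, X i ω))
    (hPHα : ∀ Y ∈ 𝒳, ∀ c : ℝ, 0 < c → ρ α (c • Y) = c * ρ α Y) :
    DQ αbar ρ α X = 1 := by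
  have hportfolio : (fun ω => ∑ i, X i ω) = (∑ i, l i) • Z := by
    ext ω
    simp only [hXdef, Pi.smul_apply, smul_eq_mul, Finset.sum_mul]
  have hsum : ρ α (fun ω => ∑ i, X i ω) = ∑ i, ρ α (X i) := by
    rw [hportfolio, ← sum_map_smul_of_pos_homogeneous hPHα (hconst 0) hZ _ hl]
    simp only [hXdef]
  exact DQ_eq_one_of_map_sum_eq_of_nonflat hα hαI hsum hnf

/-- a portfolio relying on a single asset has `DQ^ρ_α = 1` when `ρ_α`
is positively homogeneous (Theorem on interpreting DQ, part (iii)). -/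
theorem stmt_7 {Ω : Type*} (𝒳 : Set (Ω → ℝ))
    (hadd : ∀ X ∈ 𝒳, ∀ Y ∈ 𝒳, X + Y ∈ 𝒳)
    (hsmul : ∀ X ∈ 𝒳, ∀ c : ℝ, 0 < c → c • X ∈ 𝒳)
    (hconst : ∀ c : ℝ, (fun _ : Ω => c) ∈ 𝒳)
    (αbar : EReal) (hαbar : 0 < αbar)
    (ρ : ℝ → (Ω → ℝ) → ℝ)
    (hdec : ∀ Y ∈ 𝒳, ∀ β γ : ℝ, 0 < β → (β : EReal) < αbar → 0 < γ → (γ : EReal) < αbar →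
      β ≤ γ → ρ γ Y ≤ ρ β Y)
    (α : ℝ) (hα : 0 < α) (hαI : (α : EReal) < αbar)
    (n : ℕ) (hn : 0 < n)
    (Z : Ω → ℝ) (hZ : Z ∈ 𝒳) (l : Fin n → ℝ) (hl : ∀ i, 0 ≤ l i)
    (X : Fin n → Ω → ℝ) (hXdef : ∀ i, X i = l i • Z)
    (hlc : Tendsto (fun β => ρ β (fun ω => ∑ i, X i ω)) (nhdsWithin α (Set.Iio α))
      (nhds (ρ α (fun ω => ∑ i, X i ω))))
    (hnf : ∀ β : ℝ, 0 < β → β < α →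
      ρ α (fun ω => ∑ i, X i ω) < ρ β (fun ω => ∑ i, X i ω))
    (hPHα : ∀ Y ∈ 𝒳, ∀ c : ℝ, 0 < c → ρ α (c • Y) = c * ρ α Y) :
    DQ αbar ρ α X = 1 :=
  stmt_7_general 𝒳 hconst αbar ρ α hα hαI n Z hZ l hl X hXdef hnf hPHα
end

section
/- Let ρ = (ρ_α)_{α∈I} be a family of risk measures on a convex cone X of random variables containing all constants, with ρ_α(X) decreasing in α, let α ∈ I, and let X = (X_1,…,X_n) ∈ X^n be comonotonic. Assume ρ is left continuous and non-flat from the left at (α, X_1+⋯+X_n), and that ρ_α is comonotonic-additive. Then DQ^ρ_α(X) = 1. -/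
/-!
Comonotonic additivity of `ρ_α` extends by induction to the finite comonotonic sum, since a
partial sum `X_1 + ⋯ + X_k` is again an increasing function of the common driver `Z`. Hence
`ρ_α(X_1 + ⋯ + X_n) = ρ_α(X_1) + ⋯ + ρ_α(X_n)`, so `α` itself lies in the set whose infimum is
`α*`, while non-flatness from the left excludes every `β < α`. Thus `α* = α`.
-/

open MeasureTheory Filter

section ComonotonicAdditivity

variable {Ω : Type*} [MeasurableSpace Ω] (μ : Measure Ω) (𝒳 : Set (Ω → ℝ))

def IsComonotonicAdditiveOn (φ : (Ω → ℝ) → ℝ) : Prop :=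
  ∀ U ∈ 𝒳, ∀ V ∈ 𝒳,
    (∃ (Z : Ω → ℝ) (g h : ℝ → ℝ), Monotone g ∧ Monotone h ∧
      U =ᵐ[μ] (fun ω => g (Z ω)) ∧ V =ᵐ[μ] (fun ω => h (Z ω))) →
    φ (U + V) = φ U + φ V

variable {μ 𝒳}

theorem IsComonotonicAdditiveOn.map_zero {φ : (Ω → ℝ) → ℝ}
    (hφ : IsComonotonicAdditiveOn μ 𝒳 φ) (h0 : (0 : Ω → ℝ) ∈ 𝒳) : φ 0 = 0 := by
  have h := hφ 0 h0 0 h0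
    ⟨0, 0, 0, monotone_const, monotone_const, EventuallyEq.rfl, EventuallyEq.rfl⟩
  rw [add_zero] at h
  linarith

theorem IsComonotonicAdditiveOn.map_sum {φ : (Ω → ℝ) → ℝ}
    (hφ : IsComonotonicAdditiveOn μ 𝒳 φ) (hadd : ∀ X ∈ 𝒳, ∀ Y ∈ 𝒳, X + Y ∈ 𝒳)
    (h0 : (0 : Ω → ℝ) ∈ 𝒳) {ι : Type*} {X : ι → Ω → ℝ} (hX : ∀ i, X i ∈ 𝒳)
    {Z : Ω → ℝ} {f : ι → ℝ → ℝ} (hf : ∀ i, Monotone (f i))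
    (hXf : ∀ i, X i =ᵐ[μ] fun ω => f i (Z ω)) (s : Finset ι) :
    (fun ω => ∑ i ∈ s, X i ω) ∈ 𝒳 ∧ φ (fun ω => ∑ i ∈ s, X i ω) = ∑ i ∈ s, φ (X i) := by
  induction s using Finset.cons_induction with
  | empty =>
    simp only [Finset.sum_empty]
    exact ⟨h0, hφ.map_zero h0⟩
  | cons i s hi ih =>
    obtain ⟨hmem, hsum⟩ := ih
    have hsplit :
        (fun ω => ∑ j ∈ Finset.cons i s hi, X j ω) = X i + fun ω => ∑ j ∈ s, X j ω := by
      funext ω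
      exact Finset.sum_cons hi
    have hpartial : (fun ω => ∑ j ∈ s, X j ω) =ᵐ[μ] fun ω => ∑ j ∈ s, f j (Z ω) := by
      filter_upwards [ae_all_iff.2 fun j : s => hXf j] with ω hω
      exact Finset.sum_congr rfl fun j hj => hω ⟨j, hj⟩
    have hcomon := hφ (X i) (hX i) _ hmem
      ⟨Z, f i, fun z => ∑ j ∈ s, f j z, hf i,
        fun _ _ hab => Finset.sum_le_sum fun j _ => hf j hab, hXf i, hpartial⟩
    rw [hsplit, hcomon, hsum, Finset.sum_cons]
    exact ⟨hadd _ (hX i) _ hmem, rfl⟩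

end ComonotonicAdditivity

theorem DQ_eq_one_of_map_sum_eq {Ω : Type*} {n : ℕ} {αbar : EReal} {ρ : ℝ → (Ω → ℝ) → ℝ}
    {α : ℝ} {X : Fin n → Ω → ℝ} (hα : 0 < α) (hαI : (α : EReal) < αbar)
    (hsum : ρ α (fun ω => ∑ i, X i ω) = ∑ i, ρ α (X i))
    (hnf : ∀ β : ℝ, 0 < β → β < α →
      ρ α (fun ω => ∑ i, X i ω) < ρ β (fun ω => ∑ i, X i ω)) :
    DQ αbar ρ α X = 1 := by
  set A : Set ℝ := {β : ℝ | 0 < β ∧ (β : EReal) < αbar ∧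
      ρ β (fun ω => ∑ i, X i ω) ≤ ∑ i, ρ α (X i)}
  have hαA : α ∈ A := ⟨hα, hαI, hsum.le⟩
  have hlb : ∀ β ∈ A, α ≤ β := fun β ⟨hβ, _, hle⟩ => by
    by_contra! hlt
    linarith [hnf β hβ hlt]
  have hinf : sInf A = α := IsLeast.csInf_eq ⟨hαA, hlb⟩
  rw [DQ, if_pos ⟨α, hαA⟩, hinf, ← EReal.coe_mul, mul_inv_cancel₀ hα.ne', EReal.coe_one]

theorem stmt_8_general {Ω : Type*} [MeasurableSpace Ω] (μ : Measure Ω)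
    (𝒳 : Set (Ω → ℝ))
    (hadd : ∀ X ∈ 𝒳, ∀ Y ∈ 𝒳, X + Y ∈ 𝒳)
    (hconst : ∀ c : ℝ, (fun _ : Ω => c) ∈ 𝒳)
    (αbar : EReal)
    (ρ : ℝ → (Ω → ℝ) → ℝ)
    (α : ℝ) (hα : 0 < α) (hαI : (α : EReal) < αbar)
    (n : ℕ) (X : Fin n → Ω → ℝ) (hX : ∀ i, X i ∈ 𝒳)
    -- `X` is comonotonic
    (hcom : ∃ (Z : Ω → ℝ) (f : Fin n → ℝ → ℝ), (∀ i, Monotone (f i)) ∧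
      ∀ i, X i =ᵐ[μ] fun ω => f i (Z ω))
    -- `ρ_α` is comonotonic-additive
    (hca : ∀ U ∈ 𝒳, ∀ V ∈ 𝒳,
      (∃ (Z : Ω → ℝ) (g h : ℝ → ℝ), Monotone g ∧ Monotone h ∧
        U =ᵐ[μ] (fun ω => g (Z ω)) ∧ V =ᵐ[μ] (fun ω => h (Z ω))) →
      ρ α (U + V) = ρ α U + ρ α V)
    (hnf : ∀ β : ℝ, 0 < β → β < α →
      ρ α (fun ω => ∑ i, X i ω) < ρ β (fun ω => ∑ i, X i ω)) :
    DQ αbar ρ α X = 1 := by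
  obtain ⟨Z, f, hf, hXf⟩ := hcom
  have hρα : IsComonotonicAdditiveOn μ 𝒳 (ρ α) := hca
  exact DQ_eq_one_of_map_sum_eq hα hαI
    (hρα.map_sum hadd (hconst 0) hX hf hXf Finset.univ).2 hnf

/-- a comonotonic portfolio has `DQ^ρ_α = 1` when `ρ_α` is
comonotonic-additive (Theorem on interpreting DQ, part (iv)). -/
theorem stmt_8 {Ω : Type*} [MeasurableSpace Ω] (μ : Measure Ω) [IsProbabilityMeasure μ]
    (hatomless : ∀ s : Set Ω, MeasurableSet s → 0 < μ s →
      ∃ t, t ⊆ s ∧ MeasurableSet t ∧ 0 < μ t ∧ μ t < μ s)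
    (𝒳 : Set (Ω → ℝ))
    (hadd : ∀ X ∈ 𝒳, ∀ Y ∈ 𝒳, X + Y ∈ 𝒳)
    (hsmul : ∀ X ∈ 𝒳, ∀ c : ℝ, 0 < c → c • X ∈ 𝒳)
    (hconst : ∀ c : ℝ, (fun _ : Ω => c) ∈ 𝒳)
    (αbar : EReal) (hαbar : 0 < αbar)
    (ρ : ℝ → (Ω → ℝ) → ℝ)
    (hdec : ∀ Y ∈ 𝒳, ∀ β γ : ℝ, 0 < β → (β : EReal) < αbar → 0 < γ → (γ : EReal) < αbar →
      β ≤ γ → ρ γ Y ≤ ρ β Y)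
    (α : ℝ) (hα : 0 < α) (hαI : (α : EReal) < αbar)
    (n : ℕ) (hn : 0 < n) (X : Fin n → Ω → ℝ) (hX : ∀ i, X i ∈ 𝒳)
    -- `X` is comonotonic
    (hcom : ∃ (Z : Ω → ℝ) (f : Fin n → ℝ → ℝ), (∀ i, Monotone (f i)) ∧
      ∀ i, X i =ᵐ[μ] fun ω => f i (Z ω))
    -- `ρ_α` is comonotonic-additive
    (hca : ∀ U ∈ 𝒳, ∀ V ∈ 𝒳,
      (∃ (Z : Ω → ℝ) (g h : ℝ → ℝ), Monotone g ∧ Monotone h ∧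
        U =ᵐ[μ] (fun ω => g (Z ω)) ∧ V =ᵐ[μ] (fun ω => h (Z ω))) →
      ρ α (U + V) = ρ α U + ρ α V)
    (hlc : Tendsto (fun β => ρ β (fun ω => ∑ i, X i ω)) (nhdsWithin α (Set.Iio α))
      (nhds (ρ α (fun ω => ∑ i, X i ω))))
    (hnf : ∀ β : ℝ, 0 < β → β < α →
      ρ α (fun ω => ∑ i, X i ω) < ρ β (fun ω => ∑ i, X i ω)) :
    DQ αbar ρ α X = 1 :=
  stmt_8_general μ 𝒳 hadd hconst αbar ρ α hα hαI n X hX hcom hca hnf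
end

section
/- Let ρ = (ρ_α)_{α∈I} be a family of SSD-consistent risk measures on a convex cone X of random variables containing all constants, with ρ_α(X) decreasing in α. For X, Y ∈ X^n and α ∈ I, if ρ_α(X_1)+⋯+ρ_α(X_n) ≤ ρ_α(Y_1)+⋯+ρ_α(Y_n) and X_1+⋯+X_n ≤_SSD Y_1+⋯+Y_n, then DQ^ρ_α(X) ≥ DQ^ρ_α(Y). -/
open MeasureTheory Filter

/-- Second-order stochastic dominance: `U ≤_SSD V` iff `E[f(U)] ≤ E[f(V)]` for all
decreasing concave `f` for which the expectations exist. -/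
def SSDle {Ω : Type*} [MeasurableSpace Ω] (μ : MeasureTheory.Measure Ω) (U V : Ω → ℝ) : Prop :=
  ∀ f : ℝ → ℝ, Antitone f → ConcaveOn ℝ Set.univ f →
    MeasureTheory.Integrable (fun ω => f (U ω)) μ →
    MeasureTheory.Integrable (fun ω => f (V ω)) μ →
    ∫ ω, f (U ω) ∂μ ≤ ∫ ω, f (V ω) ∂μ

/-! SSD-consistency gives `ρ_β(ΣY) ≤ ρ_β(ΣX)` for every `β ∈ I`, so together with
`Σ ρ_α(X_i) ≤ Σ ρ_α(Y_i)` every level admissible in the infimum defining `DQ_α(X)` is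
admissible for `Y`, and the infimum over the larger set is smaller. -/

theorem fun_sum_mem_of_add_mem {Ω ι : Type*} [Fintype ι] {𝒳 : Set (Ω → ℝ)}
    (hadd : ∀ X ∈ 𝒳, ∀ Y ∈ 𝒳, X + Y ∈ 𝒳) (hzero : (fun _ : Ω => (0 : ℝ)) ∈ 𝒳)
    {Z : ι → Ω → ℝ} (hZ : ∀ i, Z i ∈ 𝒳) : (fun ω => ∑ i, Z i ω) ∈ 𝒳 := by
  let M : AddSubmonoid (Ω → ℝ) := ⟨⟨𝒳, fun hX hY => hadd _ hX _ hY⟩, hzero⟩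
  rw [← Finset.sum_fn]
  exact M.sum_mem fun i _ => hZ i

theorem ite_sInf_le_ite_sInf_of_subset {S T : Set ℝ}
    [Decidable S.Nonempty] [Decidable T.Nonempty] (c : EReal) (hST : S ⊆ T) (hT : BddBelow T) (hTc : ∀ β ∈ T, (β : EReal) ≤ c) :
    (if T.Nonempty then ((sInf T : ℝ) : EReal) else c) ≤
      (if S.Nonempty then ((sInf S : ℝ) : EReal) else c) := by
  by_cases hS : S.Nonempty
  · rw [if_pos hS, if_pos (hS.mono hST)]
    exact_mod_cast csInf_le_csInf hT hS hST
  · rw [if_neg hS]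
    split_ifs with hT'
    · obtain ⟨β, hβ⟩ := hT'
      exact (EReal.coe_le_coe_iff.2 (csInf_le hT hβ)).trans (hTc β hβ)
    · exact le_rfl

theorem stmt_9_general {Ω : Type*} [MeasurableSpace Ω] (μ : Measure Ω)
    (𝒳 : Set (Ω → ℝ))
    (hadd : ∀ X ∈ 𝒳, ∀ Y ∈ 𝒳, X + Y ∈ 𝒳)
    (hconst : ∀ c : ℝ, (fun _ : Ω => c) ∈ 𝒳)
    (αbar : EReal)
    (ρ : ℝ → (Ω → ℝ) → ℝ)
    -- every member of the family is SSD-consistent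
    (hssd : ∀ β : ℝ, 0 < β → (β : EReal) < αbar → ∀ U ∈ 𝒳, ∀ V ∈ 𝒳,
      SSDle μ U V → ρ β V ≤ ρ β U)
    (α : ℝ) (hα : 0 < α)
    (n : ℕ)
    (X Y : Fin n → Ω → ℝ) (hX : ∀ i, X i ∈ 𝒳) (hY : ∀ i, Y i ∈ 𝒳)
    (hsum : ∑ i, ρ α (X i) ≤ ∑ i, ρ α (Y i))
    (hdom : SSDle μ (fun ω => ∑ i, X i ω) (fun ω => ∑ i, Y i ω)) :
    DQ αbar ρ α Y ≤ DQ αbar ρ α X := by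
  classical
  have hρ : ∀ β : ℝ, 0 < β → (β : EReal) < αbar →
      ρ β (fun ω => ∑ i, Y i ω) ≤ ρ β (fun ω => ∑ i, X i ω) := fun β hβ hβI =>
    hssd β hβ hβI _ (fun_sum_mem_of_add_mem hadd (hconst 0) hX)
      _ (fun_sum_mem_of_add_mem hadd (hconst 0) hY) hdom
  refine mul_le_mul_of_nonneg_right (ite_sInf_le_ite_sInf_of_subset αbar ?_ ?_ ?_) ?_
  · exact fun β ⟨hβ, hβI, hβX⟩ => ⟨hβ, hβI, (hρ β hβ hβI).trans (hβX.trans hsum)⟩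
  · exact ⟨0, fun β hβ => hβ.1.le⟩
  · exact fun β hβ => hβ.2.1.le
  · exact_mod_cast (inv_pos.2 hα).le

/-- DQ built from SSD-consistent risk measures is monotone with respect to
second-order stochastic dominance of the total risk. -/
theorem stmt_9 {Ω : Type*} [MeasurableSpace Ω] (μ : Measure Ω) [IsProbabilityMeasure μ]
    (hatomless : ∀ s : Set Ω, MeasurableSet s → 0 < μ s →
      ∃ t, t ⊆ s ∧ MeasurableSet t ∧ 0 < μ t ∧ μ t < μ s)
    (𝒳 : Set (Ω → ℝ))
    (hadd : ∀ X ∈ 𝒳, ∀ Y ∈ 𝒳, X + Y ∈ 𝒳)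
    (hsmul : ∀ X ∈ 𝒳, ∀ c : ℝ, 0 < c → c • X ∈ 𝒳)
    (hconst : ∀ c : ℝ, (fun _ : Ω => c) ∈ 𝒳)
    (αbar : EReal) (hαbar : 0 < αbar)
    (ρ : ℝ → (Ω → ℝ) → ℝ)
    (hdec : ∀ Y ∈ 𝒳, ∀ β γ : ℝ, 0 < β → (β : EReal) < αbar → 0 < γ → (γ : EReal) < αbar →
      β ≤ γ → ρ γ Y ≤ ρ β Y)
    -- every member of the family is SSD-consistent
    (hssd : ∀ β : ℝ, 0 < β → (β : EReal) < αbar → ∀ U ∈ 𝒳, ∀ V ∈ 𝒳,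
      SSDle μ U V → ρ β V ≤ ρ β U)
    (α : ℝ) (hα : 0 < α) (hαI : (α : EReal) < αbar)
    (n : ℕ) (hn : 0 < n)
    (X Y : Fin n → Ω → ℝ) (hX : ∀ i, X i ∈ 𝒳) (hY : ∀ i, Y i ∈ 𝒳)
    (hsum : ∑ i, ρ α (X i) ≤ ∑ i, ρ α (Y i))
    (hdom : SSDle μ (fun ω => ∑ i, X i ω) (fun ω => ∑ i, Y i ω)) :
    DQ αbar ρ α Y ≤ DQ αbar ρ α X :=
  stmt_9_general μ 𝒳 hadd hconst αbar ρ hssd α hα n X Y hX hY hsum hdom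
end

section
/- For every α ∈ (0,1) and every X = (X_1,…,X_n) ∈ (L^0)^n, the diversification quotient based on the VaR family satisfies DQ^VaR_α(X) = (1/α) · P(X_1+⋯+X_n > VaR_α(X_1)+⋯+VaR_α(X_n)). -/
open MeasureTheory Filter

/-- Value-at-Risk at level `α` (small-`α` convention):
`VaR_α(X) = inf {x : P(X ≤ x) ≥ 1 - α}`. -/
noncomputable def VaR {Ω : Type*} [MeasurableSpace Ω] (μ : MeasureTheory.Measure Ω)
    (α : ℝ) (X : Ω → ℝ) : ℝ :=
  sInf {x : ℝ | ENNReal.ofReal (1 - α) ≤ μ {ω | X ω ≤ x}}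

/-! The map `β ↦ VaR_β(S)` is a generalised inverse of the tail function of `S`:
for `β ∈ (0,1)`, `VaR_β(S) ≤ c` holds exactly when `P(S > c) ≤ β`, by right-continuity of the
distribution function. Hence, with `c = ∑ VaR_α(X_i)` and `p = P(S > c)`, the set of admissible
levels in the definition of `DQ` is `(0,1) ∩ [p, ∞)`, whose infimum is `p` (or which is empty,
giving `inf ∅ = 1 = p`, when `p = 1`). -/

open Set Topology ProbabilityTheory

lemma StieltjesFunction.csInf_setOf_le_le_iff (F : StieltjesFunction ℝ) {a c : ℝ}
    (hne : {x | a ≤ F x}.Nonempty) (hbdd : BddBelow {x | a ≤ F x}) :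
    sInf {x | a ≤ F x} ≤ c ↔ a ≤ F c := by
  refine ⟨fun h => ?_, fun h => csInf_le hbdd h⟩
  have hright : Tendsto F (𝓝[>] c) (𝓝 (F c)) :=
    (F.right_continuous c).mono Ioi_subset_Ici_self
  refine ge_of_tendsto hright ?_
  filter_upwards [self_mem_nhdsWithin] with x hx
  obtain ⟨t, ht, htx⟩ := exists_lt_of_csInf_lt hne (h.trans_lt hx)
  exact ht.trans (F.mono htx.le)

lemma VaR_eq_sInf_cdf {Ω : Type*} [MeasurableSpace Ω] (μ : Measure Ω) [IsProbabilityMeasure μ]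
    {S : Ω → ℝ} (hS : Measurable S) (β : ℝ) :
    VaR μ β S = sInf {x | 1 - β ≤ cdf (μ.map S) x} := by
  have : IsProbabilityMeasure (μ.map S) := Measure.isProbabilityMeasure_map hS.aemeasurable
  unfold VaR
  congr 1
  ext x
  rw [mem_ofPred_eq, mem_ofPred_eq, cdf_eq_real, measureReal_def, Measure.map_apply hS
    measurableSet_Iic, ENNReal.ofReal_le_iff_le_toReal (measure_ne_top _ _)]
  rfl

lemma VaR_le_iff {Ω : Type*} [MeasurableSpace Ω] (μ : Measure Ω) [IsProbabilityMeasure μ]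
    {S : Ω → ℝ} (hS : Measurable S) {β : ℝ} (hβ0 : 0 < β) (hβ1 : β < 1) (c : ℝ) :
    VaR μ β S ≤ c ↔ μ.real {ω | c < S ω} ≤ β := by
  have : IsProbabilityMeasure (μ.map S) := Measure.isProbabilityMeasure_map hS.aemeasurable
  set F := cdf (μ.map S)
  have hne : {x | 1 - β ≤ F x}.Nonempty :=
    ((tendsto_cdf_atTop _).eventually_const_le (by linarith)).exists
  have hbdd : BddBelow {x | 1 - β ≤ F x} := by
    obtain ⟨x₀, hx₀⟩ := ((tendsto_cdf_atBot _).eventually_lt_const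
      (show (0 : ℝ) < 1 - β by linarith)).exists
    exact ⟨x₀, fun x hx => le_of_not_gt fun hlt => (hx.trans (F.mono hlt.le)).not_gt hx₀⟩
  have htail : μ.real {ω | c < S ω} = 1 - F c := by
    rw [cdf_eq_real, map_measureReal_apply hS measurableSet_Iic, ← probReal_compl_eq_one_sub
      (hS measurableSet_Iic)]
    congr 1
    ext ω
    simp
  rw [VaR_eq_sInf_cdf μ hS, F.csInf_setOf_le_le_iff hne hbdd, htail]
  constructor <;> intro h <;> linarith

lemma sInf_Ioo_zero_one_inter_Ici {p : ℝ} (hp0 : 0 ≤ p) (hp1 : p < 1) :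
    sInf {β : ℝ | 0 < β ∧ β < 1 ∧ p ≤ β} = p := by
  refine csInf_eq_of_forall_ge_of_forall_gt_exists_lt
    ⟨(p + 1) / 2, by linarith, by linarith, by linarith⟩ (fun β hβ => hβ.2.2) fun w hw => ?_
  have hmin : p < min w 1 := lt_min hw hp1
  exact ⟨(p + min w 1) / 2, ⟨by linarith, by linarith [min_le_right w 1], by linarith⟩,
    by linarith [min_le_left w 1]⟩

lemma DQ_one_eq_of_forall_le_iff {Ω : Type*} {n : ℕ} (ρ : ℝ → (Ω → ℝ) → ℝ) (α : ℝ)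
    (X : Fin n → Ω → ℝ) {p : ℝ} (hp0 : 0 ≤ p) (hp1 : p ≤ 1)
    (hρ : ∀ β, 0 < β → β < 1 → (ρ β (fun ω => ∑ i, X i ω) ≤ ∑ i, ρ α (X i) ↔ p ≤ β)) :
    DQ 1 ρ α X = ((p : ℝ) : EReal) * ((α⁻¹ : ℝ) : EReal) := by
  have hset : {β : ℝ | 0 < β ∧ (β : EReal) < 1 ∧
      ρ β (fun ω => ∑ i, X i ω) ≤ ∑ i, ρ α (X i)} = {β : ℝ | 0 < β ∧ β < 1 ∧ p ≤ β} := by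
    ext β
    simp only [mem_ofPred_eq, ← EReal.coe_one, EReal.coe_lt_coe_iff]
    exact ⟨fun ⟨h0, h1, h⟩ => ⟨h0, h1, (hρ β h0 h1).1 h⟩,
      fun ⟨h0, h1, h⟩ => ⟨h0, h1, (hρ β h0 h1).2 h⟩⟩
  unfold DQ
  rw [hset]
  rcases hp1.lt_or_eq with hp1 | rfl
  · rw [if_pos ⟨(p + 1) / 2, by linarith, by linarith, by linarith⟩,
      sInf_Ioo_zero_one_inter_Ici hp0 hp1]
  · rw [if_neg fun ⟨β, _, h1, h⟩ => (h.trans_lt h1).false, EReal.coe_one]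

theorem stmt_11_general {Ω : Type*} [MeasurableSpace Ω] (μ : Measure Ω) [IsProbabilityMeasure μ]
    (n : ℕ)
    (α : ℝ)
    (X : Fin n → Ω → ℝ) (hX : ∀ i, Measurable (X i)) :
    DQ 1 (fun β => VaR μ β) α X
      = ((α⁻¹ * (μ {ω | ∑ i, VaR μ α (X i) < ∑ i, X i ω}).toReal : ℝ) : EReal) := by
  have hS : Measurable fun ω => ∑ i, X i ω := Finset.measurable_sum Finset.univ fun i _ => hX i
  rw [DQ_one_eq_of_forall_le_iff _ α X measureReal_nonneg measureReal_le_one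
      fun β h0 h1 => VaR_le_iff μ hS h0 h1 _, ← EReal.coe_mul, mul_comm, measureReal_def]

/-- alternative formula for `DQ^VaR_α`:
`DQ^VaR_α(X) = (1/α) P(∑ X_i > ∑ VaR_α(X_i))`. -/
theorem stmt_11 {Ω : Type*} [MeasurableSpace Ω] (μ : Measure Ω) [IsProbabilityMeasure μ]
    (hatomless : ∀ s : Set Ω, MeasurableSet s → 0 < μ s →
      ∃ t, t ⊆ s ∧ MeasurableSet t ∧ 0 < μ t ∧ μ t < μ s)
    (n : ℕ) (hn : 0 < n)
    (α : ℝ) (hα0 : 0 < α) (hα1 : α < 1)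
    (X : Fin n → Ω → ℝ) (hX : ∀ i, Measurable (X i)) :
    DQ 1 (fun β => VaR μ β) α X
      = ((α⁻¹ * (μ {ω | ∑ i, VaR μ α (X i) < ∑ i, X i ω}).toReal : ℝ) : EReal) :=
  stmt_11_general μ n α X hX
end

section
/- Let ρ = (ρ_α)_{α∈I} be a family of convex risk measures on a convex cone X of random variables containing all constants, each satisfying positive homogeneity [PH] (ρ_β(λX) = λρ_β(X) for all λ > 0), with ρ_α(X) decreasing in α. Then for every X ∈ X^n and α ∈ I, the map w ↦ DQ^ρ_α(w ⊙ X) is quasi-convex on the simplex Δ_n: for all w, v ∈ Δ_n and λ ∈ [0,1], DQ^ρ_α((λw + (1−λ)v) ⊙ X) ≤ max{ DQ^ρ_α(w ⊙ X), DQ^ρ_α(v ⊙ X) }. -/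
theorem Set.subset_total_of_forall_le_mem {α : Type*} [LinearOrder α] {I S T : Set α}
    (hSI : S ⊆ I) (hTI : T ⊆ I)
    (hS : ∀ β ∈ S, ∀ γ ∈ I, β ≤ γ → γ ∈ S) (hT : ∀ β ∈ T, ∀ γ ∈ I, β ≤ γ → γ ∈ T) :
    S ⊆ T ∨ T ⊆ S := by
  by_contra! h
  obtain ⟨⟨x, hxS, hxT⟩, ⟨y, hyT, hyS⟩⟩ := And.intro (Set.not_subset.mp h.1)
    (Set.not_subset.mp h.2)
  rcases le_total x y with hxy | hyx
  · exact hyS (hS x hxS y (hTI hyT) hxy)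
  · exact hxT (hT y hyT x (hSI hxS) hyx)

section sInfOr

variable {αbar : EReal} {S T U : Set ℝ}

open scoped Classical in
noncomputable def sInfOr (αbar : EReal) (S : Set ℝ) : EReal :=
  if S.Nonempty then ((sInf S : ℝ) : EReal) else αbar

theorem sInfOr_le (hU : ∀ β ∈ U, (β : EReal) < αbar) (hbdd : BddBelow U) :
    sInfOr αbar U ≤ αbar := by
  unfold sInfOr
  split_ifs with hne
  · obtain ⟨β, hβ⟩ := hne
    exact ((EReal.coe_le_coe_iff.2 (csInf_le hbdd hβ)).trans_lt (hU β hβ)).le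
  · exact le_rfl

theorem sInfOr_le_sInfOr (hU : ∀ β ∈ U, (β : EReal) < αbar) (hbdd : BddBelow U) (hSU : S ⊆ U) :
    sInfOr αbar U ≤ sInfOr αbar S := by
  by_cases hS : S.Nonempty
  · rw [sInfOr, sInfOr, if_pos (hS.mono hSU), if_pos hS]
    exact EReal.coe_le_coe_iff.2 (csInf_le_csInf hbdd hS hSU)
  · rw [show sInfOr αbar S = αbar from if_neg hS]
    exact sInfOr_le hU hbdd

theorem sInfOr_le_max_of_inter_subset {I : Set ℝ} (hU : ∀ β ∈ U, (β : EReal) < αbar)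
    (hbdd : BddBelow U) (hSI : S ⊆ I) (hTI : T ⊆ I)
    (hS : ∀ β ∈ S, ∀ γ ∈ I, β ≤ γ → γ ∈ S) (hT : ∀ β ∈ T, ∀ γ ∈ I, β ≤ γ → γ ∈ T)
    (hSTU : S ∩ T ⊆ U) :
    sInfOr αbar U ≤ max (sInfOr αbar S) (sInfOr αbar T) := by
  rcases Set.subset_total_of_forall_le_mem hSI hTI hS hT with hST | hTS
  · rw [Set.inter_eq_left.2 hST] at hSTU
    exact (sInfOr_le_sInfOr hU hbdd hSTU).trans (le_max_left _ _)
  · rw [Set.inter_eq_right.2 hTS] at hSTU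
    exact (sInfOr_le_sInfOr hU hbdd hSTU).trans (le_max_right _ _)

end sInfOr

section RiskMeasure

variable {Ω : Type*} {n : ℕ}

def dqSet (αbar : EReal) (ρ : ℝ → (Ω → ℝ) → ℝ) (α : ℝ) (X : Fin n → Ω → ℝ) : Set ℝ :=
  {β | 0 < β ∧ (β : EReal) < αbar ∧ ρ β (fun ω => ∑ i, X i ω) ≤ ∑ i, ρ α (X i)}

theorem DQ_eq_sInfOr_dqSet (αbar : EReal) (ρ : ℝ → (Ω → ℝ) → ℝ) (α : ℝ)
    (X : Fin n → Ω → ℝ) :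
    DQ αbar ρ α X = sInfOr αbar (dqSet αbar ρ α X) * ((α⁻¹ : ℝ) : EReal) :=
  rfl

theorem sum_mem_of_forall_mem {𝒳 : Set (Ω → ℝ)} (hadd : ∀ X ∈ 𝒳, ∀ Y ∈ 𝒳, X + Y ∈ 𝒳)
    (hzero : (0 : Ω → ℝ) ∈ 𝒳) {Y : Fin n → Ω → ℝ} (hY : ∀ i, Y i ∈ 𝒳) :
    (fun ω => ∑ i, Y i ω) ∈ 𝒳 := by
  let M : AddSubmonoid (Ω → ℝ) :=
    { carrier := 𝒳, add_mem' := fun hX hY => hadd _ hX _ hY, zero_mem' := hzero }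
  rw [← Finset.sum_fn]
  exact M.sum_mem fun i _ => hY i

theorem smul_mem_of_nonneg {𝒳 : Set (Ω → ℝ)} (hsmul : ∀ X ∈ 𝒳, ∀ c : ℝ, 0 < c → c • X ∈ 𝒳)
    (hzero : (0 : Ω → ℝ) ∈ 𝒳) {X : Ω → ℝ} (hX : X ∈ 𝒳) {c : ℝ} (hc : 0 ≤ c) :
    c • X ∈ 𝒳 := by
  rcases hc.lt_or_eq with hc | rfl
  · exact hsmul X hX c hc
  · simpa only [zero_smul] using hzero

theorem map_smul_of_nonneg {𝒳 : Set (Ω → ℝ)} {φ : (Ω → ℝ) → ℝ}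
    (hzero : (0 : Ω → ℝ) ∈ 𝒳) (hPH : ∀ U ∈ 𝒳, ∀ l : ℝ, 0 < l → φ (l • U) = l * φ U)
    {X : Ω → ℝ} (hX : X ∈ 𝒳) {c : ℝ} (hc : 0 ≤ c) :
    φ (c • X) = c * φ X := by
  rcases hc.lt_or_eq with hc | rfl
  · exact hPH X hX c hc
  · have h2 := hPH 0 hzero 2 two_pos
    rw [smul_zero] at h2
    rw [zero_smul, zero_mul]
    linarith

theorem weighted_sum_mem {𝒳 : Set (Ω → ℝ)} (hadd : ∀ X ∈ 𝒳, ∀ Y ∈ 𝒳, X + Y ∈ 𝒳)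
    (hsmul : ∀ X ∈ 𝒳, ∀ c : ℝ, 0 < c → c • X ∈ 𝒳) (hzero : (0 : Ω → ℝ) ∈ 𝒳)
    {X : Fin n → Ω → ℝ} (hX : ∀ i, X i ∈ 𝒳) {p : Fin n → ℝ} (hp : ∀ i, 0 ≤ p i) :
    (fun ω => ∑ i, (p i • X i) ω) ∈ 𝒳 :=
  sum_mem_of_forall_mem hadd hzero fun i => smul_mem_of_nonneg hsmul hzero (hX i) (hp i)

theorem mem_dqSet_of_le {𝒳 : Set (Ω → ℝ)} {αbar : EReal} {ρ : ℝ → (Ω → ℝ) → ℝ} {α : ℝ}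
    {X : Fin n → Ω → ℝ} (hsum : (fun ω => ∑ i, X i ω) ∈ 𝒳)
    (hdec : ∀ Y ∈ 𝒳, ∀ β γ : ℝ, 0 < β → (β : EReal) < αbar → 0 < γ → (γ : EReal) < αbar →
      β ≤ γ → ρ γ Y ≤ ρ β Y)
    {β : ℝ} (hβ : β ∈ dqSet αbar ρ α X) {γ : ℝ} (hγ : 0 < γ ∧ (γ : EReal) < αbar) (hβγ : β ≤ γ) :
    γ ∈ dqSet αbar ρ α X :=
  ⟨hγ.1, hγ.2, (hdec _ hsum β γ hβ.1 hβ.2.1 hγ.1 hγ.2 hβγ).trans hβ.2.2⟩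

theorem dqSet_inter_subset_dqSet_convexCombination {𝒳 : Set (Ω → ℝ)}
    (hadd : ∀ X ∈ 𝒳, ∀ Y ∈ 𝒳, X + Y ∈ 𝒳) (hsmul : ∀ X ∈ 𝒳, ∀ c : ℝ, 0 < c → c • X ∈ 𝒳)
    (hzero : (0 : Ω → ℝ) ∈ 𝒳) {αbar : EReal} {ρ : ℝ → (Ω → ℝ) → ℝ} {α : ℝ}
    (hconv : ∀ β : ℝ, 0 < β → (β : EReal) < αbar → ∀ U ∈ 𝒳, ∀ V ∈ 𝒳, ∀ s : ℝ,
      0 ≤ s → s ≤ 1 → ρ β (s • U + (1 - s) • V) ≤ s * ρ β U + (1 - s) * ρ β V)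
    (hPH : ∀ U ∈ 𝒳, ∀ l : ℝ, 0 < l → ρ α (l • U) = l * ρ α U)
    {X : Fin n → Ω → ℝ} (hX : ∀ i, X i ∈ 𝒳) {w v : Fin n → ℝ} (hw : ∀ i, 0 ≤ w i)
    (hv : ∀ i, 0 ≤ v i) {t : ℝ} (ht0 : 0 ≤ t) (ht1 : t ≤ 1) :
    dqSet αbar ρ α (fun i => w i • X i) ∩ dqSet αbar ρ α (fun i => v i • X i) ⊆
      dqSet αbar ρ α (fun i => (t * w i + (1 - t) * v i) • X i) := by
  rintro β ⟨⟨hβ0, hβI, hβw⟩, -, hβv⟩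
  have hlinear (p : Fin n → ℝ) (hp : ∀ i, 0 ≤ p i) :
      ∑ i, ρ α (p i • X i) = ∑ i, p i * ρ α (X i) :=
    Finset.sum_congr rfl fun i _ => map_smul_of_nonneg hzero hPH (hX i) (hp i)
  have hpooled : (fun ω => ∑ i, ((t * w i + (1 - t) * v i) • X i) ω)
      = t • (fun ω => ∑ i, (w i • X i) ω) + (1 - t) • (fun ω => ∑ i, (v i • X i) ω) := by
    funext ω
    simp only [Pi.add_apply, Pi.smul_apply, smul_eq_mul, Finset.mul_sum,
      ← Finset.sum_add_distrib]
    exact Finset.sum_congr rfl fun i _ => by ring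
  have hu i : 0 ≤ t * w i + (1 - t) * v i :=
    add_nonneg (mul_nonneg ht0 (hw i)) (mul_nonneg (sub_nonneg.2 ht1) (hv i))
  refine ⟨hβ0, hβI, ?_⟩
  rw [hlinear w hw] at hβw
  rw [hlinear v hv] at hβv
  rw [hpooled, hlinear _ hu]
  calc _ ≤ t * ρ β (fun ω => ∑ i, (w i • X i) ω) + (1 - t) * ρ β (fun ω => ∑ i, (v i • X i) ω) :=
        hconv β hβ0 hβI _ (weighted_sum_mem hadd hsmul hzero hX hw) _
          (weighted_sum_mem hadd hsmul hzero hX hv) t ht0 ht1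
    _ ≤ t * ∑ i, w i * ρ α (X i) + (1 - t) * ∑ i, v i * ρ α (X i) := by
        gcongr
        linarith
    _ = ∑ i, (t * w i + (1 - t) * v i) * ρ α (X i) := by
        simp only [Finset.mul_sum, ← Finset.sum_add_distrib]
        exact Finset.sum_congr rfl fun i _ => by ring

end RiskMeasure

theorem stmt_14_general {Ω : Type*} (𝒳 : Set (Ω → ℝ))
    (hadd : ∀ X ∈ 𝒳, ∀ Y ∈ 𝒳, X + Y ∈ 𝒳)
    (hsmul : ∀ X ∈ 𝒳, ∀ c : ℝ, 0 < c → c • X ∈ 𝒳)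
    (hconst : ∀ c : ℝ, (fun _ : Ω => c) ∈ 𝒳)
    (αbar : EReal)
    (ρ : ℝ → (Ω → ℝ) → ℝ)
    (hdec : ∀ Y ∈ 𝒳, ∀ β γ : ℝ, 0 < β → (β : EReal) < αbar → 0 < γ → (γ : EReal) < αbar →
      β ≤ γ → ρ γ Y ≤ ρ β Y)
    (hconv : ∀ β : ℝ, 0 < β → (β : EReal) < αbar → ∀ U ∈ 𝒳, ∀ V ∈ 𝒳, ∀ s : ℝ,
      0 ≤ s → s ≤ 1 → ρ β (s • U + (1 - s) • V) ≤ s * ρ β U + (1 - s) * ρ β V)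
    (hPH : ∀ β : ℝ, 0 < β → (β : EReal) < αbar → ∀ U ∈ 𝒳, ∀ l : ℝ, 0 < l →
      ρ β (l • U) = l * ρ β U)
    (α : ℝ) (hα : 0 < α) (hαI : (α : EReal) < αbar)
    (n : ℕ) (X : Fin n → Ω → ℝ) (hX : ∀ i, X i ∈ 𝒳)
    (w v : Fin n → ℝ)
    (hw : (∀ i, 0 ≤ w i ∧ w i ≤ 1) ∧ ∑ i, w i = 1)
    (hv : (∀ i, 0 ≤ v i ∧ v i ≤ 1) ∧ ∑ i, v i = 1)
    (t : ℝ) (ht0 : 0 ≤ t) (ht1 : t ≤ 1) :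
    DQ αbar ρ α (fun i => (t * w i + (1 - t) * v i) • X i)
      ≤ max (DQ αbar ρ α (fun i => w i • X i)) (DQ αbar ρ α (fun i => v i • X i)) := by
  have hzero : (0 : Ω → ℝ) ∈ 𝒳 := hconst 0
  let I : Set ℝ := {β | 0 < β ∧ (β : EReal) < αbar}
  have hsubset (Y : Fin n → Ω → ℝ) : dqSet αbar ρ α Y ⊆ I := fun _ hβ => ⟨hβ.1, hβ.2.1⟩
  have hupward (p : Fin n → ℝ) (hp : ∀ i, 0 ≤ p i) :
      ∀ β ∈ dqSet αbar ρ α (fun i => p i • X i), ∀ γ ∈ I, β ≤ γ →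
        γ ∈ dqSet αbar ρ α (fun i => p i • X i) := fun _ hβ _ hγ hβγ =>
    mem_dqSet_of_le (weighted_sum_mem hadd hsmul hzero hX hp) hdec hβ hγ hβγ
  have hw0 i := (hw.1 i).1
  have hv0 i := (hv.1 i).1
  have hinf := sInfOr_le_max_of_inter_subset (fun _ hβ => hβ.2.1) ⟨0, fun _ hβ => hβ.1.le⟩
    (hsubset _) (hsubset _) (hupward w hw0) (hupward v hv0)
    (dqSet_inter_subset_dqSet_convexCombination hadd hsmul hzero hconv (hPH α hα hαI) hX
      hw0 hv0 ht0 ht1)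
  have hscale : Monotone (· * ((α⁻¹ : ℝ) : EReal)) := fun _ _ h =>
    mul_le_mul_of_nonneg_right h (EReal.coe_nonneg.2 (inv_nonneg.2 hα.le))
  simp only [DQ_eq_sInfOr_dqSet]
  exact (hscale hinf).trans hscale.map_max.le

/-- for a decreasing family of convex, positively homogeneous risk measures,
`w ↦ DQ^ρ_α(w ⊙ X)` is quasi-convex on the simplex `Δ_n`. -/
theorem stmt_14 {Ω : Type*} (𝒳 : Set (Ω → ℝ))
    (hadd : ∀ X ∈ 𝒳, ∀ Y ∈ 𝒳, X + Y ∈ 𝒳)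
    (hsmul : ∀ X ∈ 𝒳, ∀ c : ℝ, 0 < c → c • X ∈ 𝒳)
    (hconst : ∀ c : ℝ, (fun _ : Ω => c) ∈ 𝒳)
    (αbar : EReal) (hαbar : 0 < αbar)
    (ρ : ℝ → (Ω → ℝ) → ℝ)
    (hdec : ∀ Y ∈ 𝒳, ∀ β γ : ℝ, 0 < β → (β : EReal) < αbar → 0 < γ → (γ : EReal) < αbar →
      β ≤ γ → ρ γ Y ≤ ρ β Y)
    (hconv : ∀ β : ℝ, 0 < β → (β : EReal) < αbar → ∀ U ∈ 𝒳, ∀ V ∈ 𝒳, ∀ s : ℝ,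
      0 ≤ s → s ≤ 1 → ρ β (s • U + (1 - s) • V) ≤ s * ρ β U + (1 - s) * ρ β V)
    (hPH : ∀ β : ℝ, 0 < β → (β : EReal) < αbar → ∀ U ∈ 𝒳, ∀ l : ℝ, 0 < l →
      ρ β (l • U) = l * ρ β U)
    (α : ℝ) (hα : 0 < α) (hαI : (α : EReal) < αbar)
    (n : ℕ) (hn : 0 < n) (X : Fin n → Ω → ℝ) (hX : ∀ i, X i ∈ 𝒳)
    (w v : Fin n → ℝ)
    (hw : (∀ i, 0 ≤ w i ∧ w i ≤ 1) ∧ ∑ i, w i = 1)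
    (hv : (∀ i, 0 ≤ v i ∧ v i ≤ 1) ∧ ∑ i, v i = 1)
    (t : ℝ) (ht0 : 0 ≤ t) (ht1 : t ≤ 1) :
    DQ αbar ρ α (fun i => (t * w i + (1 - t) * v i) • X i)
      ≤ max (DQ αbar ρ α (fun i => w i • X i)) (DQ αbar ρ α (fun i => v i • X i)) :=
  stmt_14_general 𝒳 hadd hsmul hconst αbar ρ hdec hconv hPH α hα hαI n X hX w v hw hv t ht0 ht1
end

section
/- Fix n ≥ 1 and suppose a risk measure φ on a convex cone X of random variables containing all constants satisfies [PH]_γ (φ(λX) = λ^γ φ(X) for all λ > 0) for some γ ∈ ℝ and [CA]_m (φ(X+c) = φ(X)+mc for all c ∈ ℝ) for some m ≠ 0. Then a diversification index D : X^n → [-∞,∞] is φ-determined and satisfies [+], [LI] and [SI] if and only if there exist C₁, C₂, C₃ ∈ [0,∞] such that for all X ∈ X^n, D(X) = C₁·1{d<0} + C₂·1{d=0} + C₃·1{d>0}, where d = φ(X_1)+⋯+φ(X_n) − φ(X_1+⋯+X_n). -/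
/-!
Cash additivity evaluated on constants, compared with homogeneity evaluated on constants, forces
`λ ^ γ = λ`, so `φ` is positively homogeneous of degree one. For `λ > 0` put
`c_i = -λ φ(X_i) / m`: the portfolio `λX + c` has `φ`-profile `(-λ d, 0)` and, by [LI] and [SI],
the same value of `D` as `X`. Hence `D X = R (-λ d, 0)` for every `λ > 0`, which depends only on
the sign of `d`. Conversely `d` is unchanged by adding constants and is multiplied by `λ` under
scaling, so any function of the sign of `d` satisfies all three properties.
-/

section

variable {Ω ι β : Type*}

def divBenefit [Fintype ι] (φ : (Ω → ℝ) → ℝ) (X : ι → Ω → ℝ) : ℝ :=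
  (∑ i, φ (X i)) - φ (fun ω => ∑ i, X i ω)

noncomputable def signCases (C₁ C₂ C₃ : β) (d : ℝ) : β :=
  if d < 0 then C₁ else if d = 0 then C₂ else C₃

theorem signCases_mul_of_pos (C₁ C₂ C₃ : β) {l : ℝ} (hl : 0 < l) (d : ℝ) :
    signCases C₁ C₂ C₃ (l * d) = signCases C₁ C₂ C₃ d := by
  simp only [signCases, mul_neg_iff, mul_eq_zero, hl, hl.ne', hl.not_gt, true_and, false_and,
    false_or, or_false]

theorem eq_signCases_of_forall_mul_of_pos (g : ℝ → β) {d : ℝ}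
    (h : ∀ l : ℝ, 0 < l → g (l * d) = g d) : g d = signCases (g (-1)) (g 0) (g 1) d := by
  unfold signCases
  split_ifs with hneg hzero
  · simpa [hneg.ne] using (h (-d⁻¹) (by simpa using hneg)).symm
  · rw [hzero]
  · have hpos : 0 < d := lt_of_le_of_ne (not_lt.mp hneg) (Ne.symm hzero)
    simpa [hpos.ne'] using (h d⁻¹ (inv_pos.mpr hpos)).symm

theorem signCases_nonneg [LE β] [Zero β] {C₁ C₂ C₃ : β} (h₁ : 0 ≤ C₁) (h₂ : 0 ≤ C₂)
    (h₃ : 0 ≤ C₃) (d : ℝ) : 0 ≤ signCases C₁ C₂ C₃ d := by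
  unfold signCases
  split_ifs <;> assumption

theorem signCases_eq_max_zero [LinearOrder β] [Zero β] {C₁ C₂ C₃ : β} {d : ℝ}
    (h : 0 ≤ signCases C₁ C₂ C₃ d) :
    signCases C₁ C₂ C₃ d = signCases (max 0 C₁) (max 0 C₂) (max 0 C₃) d := by
  unfold signCases at *
  split_ifs at h ⊢ <;> exact (max_eq_right h).symm

section RiskMeasure

variable {𝒳 : Set (Ω → ℝ)} {φ : (Ω → ℝ) → ℝ} {m : ℝ}

theorem rpow_eq_self_of_cashAdditive {γ : ℝ} (hconst : ∀ c : ℝ, (fun _ : Ω => c) ∈ 𝒳)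
    (hm : m ≠ 0) (hPH : ∀ Y ∈ 𝒳, ∀ l : ℝ, 0 < l → φ (l • Y) = l ^ γ * φ Y)
    (hCA : ∀ Y ∈ 𝒳, ∀ c : ℝ, φ (Y + (fun _ => c)) = φ Y + m * c) {l : ℝ} (hl : 0 < l) :
    l ^ γ = l := by
  have hφconst (c : ℝ) : φ (fun _ : Ω => c) = φ (fun _ => 0) + m * c := by
    have h := hCA _ (hconst 0) c
    rwa [show ((fun _ : Ω => (0 : ℝ)) + fun _ => c) = fun _ => c by ext; simp] at h
  have h0 : φ (fun _ : Ω => 0) = l ^ γ * φ (fun _ => 0) := by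
    have h := hPH _ (hconst 0) l hl
    rwa [show l • (fun _ : Ω => (0 : ℝ)) = fun _ => 0 by ext; simp] at h
  have h1 : φ (fun _ : Ω => l) = l ^ γ * φ (fun _ => 1) := by
    have h := hPH _ (hconst 1) l hl
    rwa [show l • (fun _ : Ω => (1 : ℝ)) = fun _ => l by ext; simp] at h
  rw [hφconst l, hφconst 1] at h1
  exact mul_right_cancel₀ hm (by linear_combination h0 - h1)

theorem sum_fun_mem [Fintype ι] (hadd : ∀ X ∈ 𝒳, ∀ Y ∈ 𝒳, X + Y ∈ 𝒳)
    (hzero : (fun _ : Ω => (0 : ℝ)) ∈ 𝒳) {X : ι → Ω → ℝ} (hX : ∀ i, X i ∈ 𝒳) :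
    (fun ω => ∑ i, X i ω) ∈ 𝒳 := by
  simpa [Finset.sum_fn] using
    Finset.sum_induction X (· ∈ 𝒳) (fun a b ha hb ↦ hadd a ha b hb) hzero fun i _ => hX i

theorem map_smul_add_const (hsmul : ∀ X ∈ 𝒳, ∀ c : ℝ, 0 < c → c • X ∈ 𝒳)
    (hPH : ∀ Y ∈ 𝒳, ∀ l : ℝ, 0 < l → φ (l • Y) = l * φ Y)
    (hCA : ∀ Y ∈ 𝒳, ∀ c : ℝ, φ (Y + (fun _ => c)) = φ Y + m * c)
    {Y : Ω → ℝ} (hY : Y ∈ 𝒳) {l : ℝ} (hl : 0 < l) (c : ℝ) :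
    φ (l • Y + fun _ => c) = l * φ Y + m * c := by
  rw [hCA _ (hsmul Y hY l hl), hPH Y hY l hl]

theorem divBenefit_smul_add_const [Fintype ι] (hadd : ∀ X ∈ 𝒳, ∀ Y ∈ 𝒳, X + Y ∈ 𝒳)
    (hsmul : ∀ X ∈ 𝒳, ∀ c : ℝ, 0 < c → c • X ∈ 𝒳) (hconst : ∀ c : ℝ, (fun _ : Ω => c) ∈ 𝒳)
    (hPH : ∀ Y ∈ 𝒳, ∀ l : ℝ, 0 < l → φ (l • Y) = l * φ Y)
    (hCA : ∀ Y ∈ 𝒳, ∀ c : ℝ, φ (Y + (fun _ => c)) = φ Y + m * c)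
    {X : ι → Ω → ℝ} (hX : ∀ i, X i ∈ 𝒳) {l : ℝ} (hl : 0 < l) (c : ι → ℝ) :
    divBenefit φ (fun i => l • X i + fun _ => c i) = l * divBenefit φ X := by
  have hsum : (fun ω => ∑ i, (l • X i + fun _ => c i : Ω → ℝ) ω)
      = l • (fun ω => ∑ i, X i ω) + fun _ => ∑ i, c i := by
    funext ω
    simp [Finset.sum_add_distrib, Finset.mul_sum]
  simp only [divBenefit, hsum, map_smul_add_const hsmul hPH hCA (hX _) hl,
    map_smul_add_const hsmul hPH hCA (sum_fun_mem hadd (hconst 0) hX) hl,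
    Finset.sum_add_distrib, ← Finset.mul_sum]
  ring

theorem divBenefit_add_const [Fintype ι] (hadd : ∀ X ∈ 𝒳, ∀ Y ∈ 𝒳, X + Y ∈ 𝒳)
    (hsmul : ∀ X ∈ 𝒳, ∀ c : ℝ, 0 < c → c • X ∈ 𝒳) (hconst : ∀ c : ℝ, (fun _ : Ω => c) ∈ 𝒳)
    (hPH : ∀ Y ∈ 𝒳, ∀ l : ℝ, 0 < l → φ (l • Y) = l * φ Y)
    (hCA : ∀ Y ∈ 𝒳, ∀ c : ℝ, φ (Y + (fun _ => c)) = φ Y + m * c)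
    {X : ι → Ω → ℝ} (hX : ∀ i, X i ∈ 𝒳) (c : ι → ℝ) :
    divBenefit φ (fun i => X i + fun _ => c i) = divBenefit φ X := by
  simpa using divBenefit_smul_add_const hadd hsmul hconst hPH hCA hX one_pos c

theorem divBenefit_smul [Fintype ι] (hadd : ∀ X ∈ 𝒳, ∀ Y ∈ 𝒳, X + Y ∈ 𝒳)
    (hsmul : ∀ X ∈ 𝒳, ∀ c : ℝ, 0 < c → c • X ∈ 𝒳) (hconst : ∀ c : ℝ, (fun _ : Ω => c) ∈ 𝒳)
    (hPH : ∀ Y ∈ 𝒳, ∀ l : ℝ, 0 < l → φ (l • Y) = l * φ Y)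
    (hCA : ∀ Y ∈ 𝒳, ∀ c : ℝ, φ (Y + (fun _ => c)) = φ Y + m * c)
    {X : ι → Ω → ℝ} (hX : ∀ i, X i ∈ 𝒳) {l : ℝ} (hl : 0 < l) :
    divBenefit φ (fun i => l • X i) = l * divBenefit φ X := by
  simpa [← Pi.zero_def] using divBenefit_smul_add_const hadd hsmul hconst hPH hCA hX hl 0

theorem apply_eq_neg_mul_divBenefit [Fintype ι] (hadd : ∀ X ∈ 𝒳, ∀ Y ∈ 𝒳, X + Y ∈ 𝒳)
    (hsmul : ∀ X ∈ 𝒳, ∀ c : ℝ, 0 < c → c • X ∈ 𝒳) (hconst : ∀ c : ℝ, (fun _ : Ω => c) ∈ 𝒳)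
    (hm : m ≠ 0) (hPH : ∀ Y ∈ 𝒳, ∀ l : ℝ, 0 < l → φ (l • Y) = l * φ Y)
    (hCA : ∀ Y ∈ 𝒳, ∀ c : ℝ, φ (Y + (fun _ => c)) = φ Y + m * c)
    {D : (ι → Ω → ℝ) → EReal} {R : ℝ × (ι → ℝ) → EReal}
    (hR : ∀ X : ι → Ω → ℝ, (∀ i, X i ∈ 𝒳) →
      D X = R (φ (fun ω => ∑ i, X i ω), fun i => φ (X i)))
    (hLI : ∀ X : ι → Ω → ℝ, (∀ i, X i ∈ 𝒳) → ∀ c : ι → ℝ,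
      D (fun i => X i + (fun _ => c i)) = D X)
    (hSI : ∀ X : ι → Ω → ℝ, (∀ i, X i ∈ 𝒳) → ∀ l : ℝ, 0 < l → D (fun i => l • X i) = D X)
    {X : ι → Ω → ℝ} (hX : ∀ i, X i ∈ 𝒳) {l : ℝ} (hl : 0 < l) :
    D X = R (-(l * divBenefit φ X), 0) := by
  set c : ι → ℝ := fun i => -(l * φ (X i)) / m
  have hlX : ∀ i, l • X i ∈ 𝒳 := fun i => hsmul _ (hX i) l hl
  have hY : ∀ i, l • X i + (fun _ => c i) ∈ 𝒳 := fun i => hadd _ (hlX i) _ (hconst (c i))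
  have hφY : ∀ i, φ (l • X i + fun _ => c i) = 0 := fun i => by
    rw [map_smul_add_const hsmul hPH hCA (hX i) hl]
    simp only [c]
    field_simp
    ring
  have hφsum : φ (fun ω => ∑ i, (l • X i + fun _ => c i : Ω → ℝ) ω) = -(l * divBenefit φ X) := by
    rw [← divBenefit_smul_add_const hadd hsmul hconst hPH hCA hX hl c, divBenefit]
    simp [hφY]
  rw [← hSI X hX l hl, ← hLI _ hlX c, hR _ hY, hφsum, funext hφY]
  rfl

theorem apply_eq_signCases_of_determined [Fintype ι] (hadd : ∀ X ∈ 𝒳, ∀ Y ∈ 𝒳, X + Y ∈ 𝒳)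
    (hsmul : ∀ X ∈ 𝒳, ∀ c : ℝ, 0 < c → c • X ∈ 𝒳) (hconst : ∀ c : ℝ, (fun _ : Ω => c) ∈ 𝒳)
    (hm : m ≠ 0) (hPH : ∀ Y ∈ 𝒳, ∀ l : ℝ, 0 < l → φ (l • Y) = l * φ Y)
    (hCA : ∀ Y ∈ 𝒳, ∀ c : ℝ, φ (Y + (fun _ => c)) = φ Y + m * c)
    {D : (ι → Ω → ℝ) → EReal} {R : ℝ × (ι → ℝ) → EReal}
    (hR : ∀ X : ι → Ω → ℝ, (∀ i, X i ∈ 𝒳) →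
      D X = R (φ (fun ω => ∑ i, X i ω), fun i => φ (X i)))
    (hLI : ∀ X : ι → Ω → ℝ, (∀ i, X i ∈ 𝒳) → ∀ c : ι → ℝ,
      D (fun i => X i + (fun _ => c i)) = D X)
    (hSI : ∀ X : ι → Ω → ℝ, (∀ i, X i ∈ 𝒳) → ∀ l : ℝ, 0 < l → D (fun i => l • X i) = D X)
    {X : ι → Ω → ℝ} (hX : ∀ i, X i ∈ 𝒳) :
    D X = signCases (R (1, 0)) (R (0, 0)) (R (-1, 0)) (divBenefit φ X) := by
  let g : ℝ → EReal := fun d => R (-d, 0)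
  have hg (l : ℝ) (hl : 0 < l) : g (l * divBenefit φ X) = D X :=
    (apply_eq_neg_mul_divBenefit hadd hsmul hconst hm hPH hCA hR hLI hSI hX hl).symm
  have hg₁ : g (divBenefit φ X) = D X := by simpa using hg 1 one_pos
  have hsign := eq_signCases_of_forall_mul_of_pos g fun l hl => (hg l hl).trans hg₁.symm
  simpa [g, hg₁] using hsign

end RiskMeasure

end

open scoped Classical in
theorem stmt_16_general {Ω : Type*} (𝒳 : Set (Ω → ℝ))
    (hadd : ∀ X ∈ 𝒳, ∀ Y ∈ 𝒳, X + Y ∈ 𝒳)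
    (hsmul : ∀ X ∈ 𝒳, ∀ c : ℝ, 0 < c → c • X ∈ 𝒳)
    (hconst : ∀ c : ℝ, (fun _ : Ω => c) ∈ 𝒳)
    (n : ℕ)
    (φ : (Ω → ℝ) → ℝ) (γ m : ℝ) (hm : m ≠ 0)
    (hPH : ∀ Y ∈ 𝒳, ∀ l : ℝ, 0 < l → φ (l • Y) = l ^ γ * φ Y)
    (hCA : ∀ Y ∈ 𝒳, ∀ c : ℝ, φ (Y + (fun _ => c)) = φ Y + m * c)
    (D : (Fin n → Ω → ℝ) → EReal) :
    -- D is φ-determined and satisfies [+], [LI], [SI]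
    ((∃ R : ℝ × (Fin n → ℝ) → EReal, ∀ X : Fin n → Ω → ℝ, (∀ i, X i ∈ 𝒳) →
        D X = R (φ (fun ω => ∑ i, X i ω), fun i => φ (X i)))
      ∧ (∀ X : Fin n → Ω → ℝ, (∀ i, X i ∈ 𝒳) → 0 ≤ D X)
      ∧ (∀ X : Fin n → Ω → ℝ, (∀ i, X i ∈ 𝒳) → ∀ c : Fin n → ℝ,
          D (fun i => X i + (fun _ => c i)) = D X)
      ∧ (∀ X : Fin n → Ω → ℝ, (∀ i, X i ∈ 𝒳) → ∀ l : ℝ, 0 < l →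
          D (fun i => l • X i) = D X))
    ↔ (∃ C₁ C₂ C₃ : EReal, 0 ≤ C₁ ∧ 0 ≤ C₂ ∧ 0 ≤ C₃ ∧
        ∀ X : Fin n → Ω → ℝ, (∀ i, X i ∈ 𝒳) →
          D X = if (∑ i, φ (X i)) - φ (fun ω => ∑ i, X i ω) < 0 then C₁
                else if (∑ i, φ (X i)) - φ (fun ω => ∑ i, X i ω) = 0 then C₂
                else C₃) := by
  have hPH₁ : ∀ Y ∈ 𝒳, ∀ l : ℝ, 0 < l → φ (l • Y) = l * φ Y := fun Y hY l hl => by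
    rw [hPH Y hY l hl, rpow_eq_self_of_cashAdditive hconst hm hPH hCA hl]
  constructor
  · rintro ⟨⟨R, hR⟩, hpos, hLI, hSI⟩
    refine ⟨max 0 (R (1, 0)), max 0 (R (0, 0)), max 0 (R (-1, 0)), le_max_left _ _,
      le_max_left _ _, le_max_left _ _, fun X hX => ?_⟩
    have hDX := apply_eq_signCases_of_determined hadd hsmul hconst hm hPH₁ hCA hR hLI hSI hX
    exact hDX.trans (signCases_eq_max_zero (hDX ▸ hpos X hX))
  · rintro ⟨C₁, C₂, C₃, hC₁, hC₂, hC₃, hD⟩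
    have hDs : ∀ X : Fin n → Ω → ℝ, (∀ i, X i ∈ 𝒳) →
        D X = signCases C₁ C₂ C₃ (divBenefit φ X) := hD
    refine ⟨⟨fun p => signCases C₁ C₂ C₃ ((∑ i, p.2 i) - p.1), hD⟩, fun X hX => ?_,
      fun X hX c => ?_, fun X hX l hl => ?_⟩
    · exact hDs X hX ▸ signCases_nonneg hC₁ hC₂ hC₃ _
    · rw [hDs _ fun i => hadd _ (hX i) _ (hconst (c i)), hDs X hX,
        divBenefit_add_const hadd hsmul hconst hPH₁ hCA hX]
    · rw [hDs _ fun i => hsmul _ (hX i) l hl, hDs X hX,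
        divBenefit_smul hadd hsmul hconst hPH₁ hCA hX hl, signCases_mul_of_pos _ _ _ hl]

open scoped Classical in
/-- a φ-determined diversification index satisfies [+], [LI] and [SI]
(for an [PH]_γ, [CA]_m risk measure φ with m ≠ 0) if and only if it is of the degenerate
three-value form driven by the sign of the diversification benefit
`d = ∑ φ(X_i) − φ(∑ X_i)`. -/
theorem stmt_16 {Ω : Type*} (𝒳 : Set (Ω → ℝ))
    (hadd : ∀ X ∈ 𝒳, ∀ Y ∈ 𝒳, X + Y ∈ 𝒳)
    (hsmul : ∀ X ∈ 𝒳, ∀ c : ℝ, 0 < c → c • X ∈ 𝒳)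
    (hconst : ∀ c : ℝ, (fun _ : Ω => c) ∈ 𝒳)
    (n : ℕ) (hn : 1 ≤ n)
    (φ : (Ω → ℝ) → ℝ) (γ m : ℝ) (hm : m ≠ 0)
    (hPH : ∀ Y ∈ 𝒳, ∀ l : ℝ, 0 < l → φ (l • Y) = l ^ γ * φ Y)
    (hCA : ∀ Y ∈ 𝒳, ∀ c : ℝ, φ (Y + (fun _ => c)) = φ Y + m * c)
    (D : (Fin n → Ω → ℝ) → EReal) :
    -- D is φ-determined and satisfies [+], [LI], [SI]
    ((∃ R : ℝ × (Fin n → ℝ) → EReal, ∀ X : Fin n → Ω → ℝ, (∀ i, X i ∈ 𝒳) →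
        D X = R (φ (fun ω => ∑ i, X i ω), fun i => φ (X i)))
      ∧ (∀ X : Fin n → Ω → ℝ, (∀ i, X i ∈ 𝒳) → 0 ≤ D X)
      ∧ (∀ X : Fin n → Ω → ℝ, (∀ i, X i ∈ 𝒳) → ∀ c : Fin n → ℝ,
          D (fun i => X i + (fun _ => c i)) = D X)
      ∧ (∀ X : Fin n → Ω → ℝ, (∀ i, X i ∈ 𝒳) → ∀ l : ℝ, 0 < l →
          D (fun i => l • X i) = D X))
    ↔ (∃ C₁ C₂ C₃ : EReal, 0 ≤ C₁ ∧ 0 ≤ C₂ ∧ 0 ≤ C₃ ∧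
        ∀ X : Fin n → Ω → ℝ, (∀ i, X i ∈ 𝒳) →
          D X = if (∑ i, φ (X i)) - φ (fun ω => ∑ i, X i ω) < 0 then C₁
                else if (∑ i, φ (X i)) - φ (fun ω => ∑ i, X i ω) = 0 then C₂
                else C₃) :=
  stmt_16_general 𝒳 hadd hsmul hconst n φ γ m hm hPH hCA D
end

section
/- A function R : ℝ^{n+1} → [-∞,∞] satisfies, for all x₀ ∈ ℝ, x = (x_1,…,x_n) ∈ ℝ^n, c = (c_1,…,c_n) ∈ ℝ^n and λ > 0, (i) R(x₀ + ∑_{i=1}^n c_i, x + c) = R(x₀, x) and (ii) R(λx₀, λx) = R(x₀, x), if and only if there exist C₁, C₂, C₃ ∈ [-∞,∞] such that R(x₀, x) = C₁·1{r<0} + C₂·1{r=0} + C₃·1{r>0} for all x₀ ∈ ℝ and x ∈ ℝ^n, where r = ∑_{i=1}^n x_i − x₀. -/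
/-!
Invariance under the translations (i) identifies `(x₀, x)` with `(-r, 0)`, where
`r = ∑ xᵢ - x₀`, so `R` is a function of `r` alone; invariance under the dilations (ii) then
says that this function of one real variable is constant on each of `r < 0`, `r = 0`, `r > 0`.
-/

section SignCases

variable {α : Type*}

lemma ite_sign_mul_of_pos {l : ℝ} (hl : 0 < l) (r : ℝ) (C₁ C₂ C₃ : α) :
    (if l * r < 0 then C₁ else if l * r = 0 then C₂ else C₃)
      = if r < 0 then C₁ else if r = 0 then C₂ else C₃ := by
  simp only [← smul_eq_mul, smul_neg_iff_of_pos_left hl, smul_eq_zero, hl.ne', false_or]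

lemma eq_ite_sign_of_forall_mul_eq {g : ℝ → α} (hg : ∀ r l : ℝ, 0 < l → g (l * r) = g r)
    (r : ℝ) : g r = if r < 0 then g (-1) else if r = 0 then g 0 else g 1 := by
  rcases lt_trichotomy r 0 with hr | rfl | hr
  · simpa [hr] using hg (-1) (-r) (neg_pos.mpr hr)
  · simp
  · simpa [hr.not_gt, hr.ne'] using hg 1 r hr

end SignCases

section Residual

variable {ι α : Type*} [Fintype ι]

lemma residual_add (x₀ : ℝ) (x c : ι → ℝ) :
    (∑ i, (x + c) i) - (x₀ + ∑ i, c i) = (∑ i, x i) - x₀ := by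
  simp only [Pi.add_apply, Finset.sum_add_distrib]
  ring

lemma residual_smul (l x₀ : ℝ) (x : ι → ℝ) :
    (∑ i, (l • x) i) - l * x₀ = l * ((∑ i, x i) - x₀) := by
  simp only [Pi.smul_apply, smul_eq_mul, mul_sub, Finset.mul_sum]

lemma apply_eq_apply_neg_residual {R : ℝ × (ι → ℝ) → α}
    (hR : ∀ (x₀ : ℝ) (x c : ι → ℝ), R (x₀ + ∑ i, c i, x + c) = R (x₀, x)) (x₀ : ℝ) (x : ι → ℝ) :
    R (x₀, x) = R (-((∑ i, x i) - x₀), 0) := by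
  simpa using hR (x₀ - ∑ i, x i) 0 x

end Residual

open scoped Classical in
theorem stmt_17_general (n : ℕ) (R : ℝ × (Fin n → ℝ) → EReal) :
    ((∀ (x₀ : ℝ) (x c : Fin n → ℝ), R (x₀ + ∑ i, c i, x + c) = R (x₀, x))
      ∧ (∀ (x₀ : ℝ) (x : Fin n → ℝ) (l : ℝ), 0 < l → R (l * x₀, l • x) = R (x₀, x)))
    ↔ (∃ C₁ C₂ C₃ : EReal, ∀ (x₀ : ℝ) (x : Fin n → ℝ),
        R (x₀, x) = if (∑ i, x i) - x₀ < 0 then C₁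
                    else if (∑ i, x i) - x₀ = 0 then C₂
                    else C₃) := by
  constructor
  · rintro ⟨htrans, hscale⟩
    have hg : ∀ r l : ℝ, 0 < l → R (-(l * r), 0) = R (-r, 0) := fun r l hl => by
      simpa using hscale (-r) 0 l hl
    refine ⟨R (1, 0), R (0, 0), R (-1, 0), fun x₀ x => ?_⟩
    rw [apply_eq_apply_neg_residual htrans,
      eq_ite_sign_of_forall_mul_eq (g := fun r => R (-r, 0)) hg, neg_neg, neg_zero]
  · rintro ⟨C₁, C₂, C₃, hR⟩
    refine ⟨fun x₀ x c => ?_, fun x₀ x l hl => ?_⟩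
    · rw [hR, hR, residual_add]
    · rw [hR, hR, residual_smul, ite_sign_mul_of_pos hl]

open scoped Classical in
/-- a function `R : ℝ^{n+1} → [-∞,∞]` is invariant under the two operations
(i) `(x₀, x) ↦ (x₀ + ∑ c_i, x + c)` and (ii) `(x₀, x) ↦ (λx₀, λx)` for `λ > 0`
if and only if it is a three-value function of the sign of `r = ∑ x_i − x₀`. -/
theorem stmt_17 (n : ℕ) (hn : 0 < n) (R : ℝ × (Fin n → ℝ) → EReal) :
    ((∀ (x₀ : ℝ) (x c : Fin n → ℝ), R (x₀ + ∑ i, c i, x + c) = R (x₀, x))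
      ∧ (∀ (x₀ : ℝ) (x : Fin n → ℝ) (l : ℝ), 0 < l → R (l * x₀, l • x) = R (x₀, x)))
    ↔ (∃ C₁ C₂ C₃ : EReal, ∀ (x₀ : ℝ) (x : Fin n → ℝ),
        R (x₀, x) = if (∑ i, x i) - x₀ < 0 then C₁
                    else if (∑ i, x i) - x₀ = 0 then C₂
                    else C₃) :=
  stmt_17_general n R
end

section
/- Let φ : X → ℝ_+ be a non-negative risk measure on a convex cone X of random variables containing all constants, and define the family ρ = (ρ_α)_{α∈(0,∞)} by ρ_α = φ/α. Then for every α ∈ (0,∞) and every X ∈ X^n, DQ^ρ_α(X) = DR^φ(X). The same conclusion holds, with X = L^1, if ρ_α = b·E + c·φ/α for some b ∈ ℝ and c > 0, where E denotes expectation. -/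
open MeasureTheory Filter

open scoped Classical in
/-- The diversification ratio `DR^φ(X) = φ(∑ X_i) / ∑ φ(X_i)`, with the conventions
`0/0 = 0` and `1/0 = ∞` when the denominator vanishes. -/
noncomputable def DR {Ω : Type*} {n : ℕ} (φ : (Ω → ℝ) → ℝ) (X : Fin n → Ω → ℝ) : EReal :=
  if (∑ i, φ (X i)) = 0 then (if φ (fun ω => ∑ i, X i ω) = 0 then 0 else ⊤)
  else ((φ (fun ω => ∑ i, X i ω) / ∑ i, φ (X i) : ℝ) : EReal)

/-!
With `ρ_β = φ/β` the acceptance condition `ρ_β(∑ Xᵢ) ≤ ∑ ρ_α(Xᵢ)` reads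
`φ(∑ Xᵢ)/β ≤ (∑ φ(Xᵢ))/α`. When `∑ φ(Xᵢ) > 0` this means `β ≥ α · DR^φ(X)`, so `α* = α · DR^φ(X)`;
when `∑ φ(Xᵢ) = 0` it holds for every `β > 0` or for none, according as `φ(∑ Xᵢ)` is `0` or not,
giving `α* = 0` or `α* = ∞`. For `ρ_β = b·E + c·φ/β` the expectation terms cancel by linearity of
`E` on `L¹` and `c > 0` divides out, so the acceptance condition is the same.
-/

lemma csInf_setOf_pos_and_le {c : ℝ} (hc : 0 ≤ c) : sInf {β : ℝ | 0 < β ∧ c ≤ β} = c := by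
  rcases hc.eq_or_lt with rfl | hc
  · have : {β : ℝ | 0 < β ∧ 0 ≤ β} = Set.Ioi 0 :=
      Set.ext fun β => ⟨And.left, fun h => ⟨h, h.le⟩⟩
    rw [this, csInf_Ioi]
  · have : {β : ℝ | 0 < β ∧ c ≤ β} = Set.Ici c :=
      Set.ext fun β => ⟨And.right, fun h => ⟨hc.trans_le h, h⟩⟩
    rw [this, csInf_Ici]

section DiversificationQuotient

variable {Ω : Type*} {n : ℕ}

open scoped Classical in
lemma DQ_top_eq_of_iff {ρ : ℝ → (Ω → ℝ) → ℝ} {α : ℝ} {X : Fin n → Ω → ℝ}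
    {P : ℝ → Prop}
    (h : ∀ β, 0 < β → (ρ β (fun ω => ∑ i, X i ω) ≤ ∑ i, ρ α (X i) ↔ P β)) :
    DQ ⊤ ρ α X = (if {β : ℝ | 0 < β ∧ P β}.Nonempty
        then ((sInf {β : ℝ | 0 < β ∧ P β} : ℝ) : EReal) else ⊤) *
      ((α⁻¹ : ℝ) : EReal) := by
  have hset : {β : ℝ | 0 < β ∧ (β : EReal) < ⊤ ∧
      ρ β (fun ω => ∑ i, X i ω) ≤ ∑ i, ρ α (X i)} = {β : ℝ | 0 < β ∧ P β} :=
    Set.ext fun β => and_congr_right fun hβ =>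
      (and_iff_right (EReal.coe_lt_top β)).trans (h β hβ)
  rw [DQ, hset]

lemma DQ_top_eq_DR_of_iff {ρ : ℝ → (Ω → ℝ) → ℝ} {φ : (Ω → ℝ) → ℝ} {α : ℝ}
    (hα : 0 < α) {X : Fin n → Ω → ℝ} (hN : 0 ≤ φ (fun ω => ∑ i, X i ω))
    (hD : 0 ≤ ∑ i, φ (X i))
    (h : ∀ β, 0 < β → (ρ β (fun ω => ∑ i, X i ω) ≤ ∑ i, ρ α (X i) ↔
      φ (fun ω => ∑ i, X i ω) / β ≤ (∑ i, φ (X i)) / α)) :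
    DQ ⊤ ρ α X = DR φ X := by
  rw [DQ_top_eq_of_iff h, DR]
  set N := φ (fun ω => ∑ i, X i ω)
  set D := ∑ i, φ (X i)
  rcases hD.eq_or_lt with hD0 | hD0
  · rw [← hD0, if_pos rfl]
    rcases hN.eq_or_lt with hN0 | hN0
    · have hset : {β : ℝ | 0 < β ∧ N / β ≤ 0 / α} = Set.Ioi 0 := by
        ext β; simp [← hN0]
      rw [hset, if_pos Set.nonempty_Ioi, csInf_Ioi, ← hN0, if_pos rfl]
      simp
    · have hset : {β : ℝ | 0 < β ∧ N / β ≤ 0 / α} = ∅ :=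
        Set.eq_empty_of_forall_notMem fun β ⟨hβ, hle⟩ => by
          rw [zero_div] at hle; exact (div_pos hN0 hβ).not_ge hle
      rw [hset, if_neg Set.not_nonempty_empty, if_neg hN0.ne']
      exact EReal.top_mul_of_pos (by exact_mod_cast inv_pos.mpr hα)
  · have hset :
        {β : ℝ | 0 < β ∧ N / β ≤ D / α} = {β : ℝ | 0 < β ∧ N * α / D ≤ β} :=
      Set.ext fun β => and_congr_right fun hβ => by
        rw [div_le_div_iff₀ hβ hα, div_le_iff₀ hD0, mul_comm β D]
    have hne : {β : ℝ | 0 < β ∧ N * α / D ≤ β}.Nonempty :=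
      ⟨N * α / D + 1, by positivity, by linarith⟩
    rw [hset, if_pos hne, csInf_setOf_pos_and_le (by positivity), if_neg hD0.ne', ← EReal.coe_mul]
    congr 1
    field_simp

end DiversificationQuotient

lemma integral_add_mul_div_le_sum_iff {Ω : Type*} [MeasurableSpace Ω] {μ : Measure Ω} {n : ℕ}
    {φ : (Ω → ℝ) → ℝ} {b c : ℝ} (hc : 0 < c) {α β : ℝ} {X : Fin n → Ω → ℝ}
    (hX : ∀ i, Integrable (X i) μ) :
    b * ∫ ω, (∑ i, X i ω) ∂μ + c * (φ (fun ω => ∑ i, X i ω) / β) ≤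
        ∑ i, (b * ∫ ω, X i ω ∂μ + c * (φ (X i) / α)) ↔
      φ (fun ω => ∑ i, X i ω) / β ≤ (∑ i, φ (X i)) / α := by
  rw [integral_finsetSum _ fun i _ => hX i, Finset.sum_add_distrib, ← Finset.mul_sum,
    add_le_add_iff_left, ← Finset.mul_sum, mul_le_mul_iff_right₀ hc, Finset.sum_div]

theorem stmt_18_general {Ω : Type*} [MeasurableSpace Ω] (μ : Measure Ω) (n : ℕ) :
    -- first part: a non-negative risk measure on a convex cone 𝒳
    (∀ 𝒳 : Set (Ω → ℝ),
      (∀ X ∈ 𝒳, ∀ Y ∈ 𝒳, X + Y ∈ 𝒳) →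
      (∀ X ∈ 𝒳, ∀ c : ℝ, 0 < c → c • X ∈ 𝒳) →
      (∀ c : ℝ, (fun _ : Ω => c) ∈ 𝒳) →
      ∀ φ : (Ω → ℝ) → ℝ, (∀ Y ∈ 𝒳, 0 ≤ φ Y) →
      ∀ α : ℝ, 0 < α → ∀ X : Fin n → Ω → ℝ, (∀ i, X i ∈ 𝒳) →
        DQ (⊤ : EReal) (fun β Y => φ Y / β) α X = DR φ X)
    -- second part: 𝒳 = L¹ and ρ_α = b·E + c·φ/α
    ∧ (∀ φ : (Ω → ℝ) → ℝ, (∀ Y : Ω → ℝ, Integrable Y μ → 0 ≤ φ Y) →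
      ∀ b c : ℝ, 0 < c →
      ∀ α : ℝ, 0 < α → ∀ X : Fin n → Ω → ℝ, (∀ i, Integrable (X i) μ) →
        DQ (⊤ : EReal) (fun β Y => b * ∫ ω, Y ω ∂μ + c * (φ Y / β)) α X = DR φ X) := by
  constructor
  · intro 𝒳 hadd _ hconst φ hφ α hα X hX
    have hsum : (fun ω => ∑ i, X i ω) ∈ 𝒳 := by
      rw [← Finset.sum_fn]
      exact Finset.sum_induction X (· ∈ 𝒳) (fun Y Z hY hZ => hadd Y hY Z hZ) (hconst 0)
        fun i _ => hX i
    exact DQ_top_eq_DR_of_iff hα (hφ _ hsum) (Finset.sum_nonneg fun i _ => hφ _ (hX i))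
      fun β _ => by rw [Finset.sum_div]
  · intro φ hφ b c hc α hα X hX
    have hsum : Integrable (fun ω => ∑ i, X i ω) μ := integrable_finsetSum _ fun i _ => hX i
    exact DQ_top_eq_DR_of_iff hα (hφ _ hsum) (Finset.sum_nonneg fun i _ => hφ _ (hX i))
      fun β _ => integral_add_mul_div_le_sum_iff hc hX

/-- for a non-negative risk measure `φ`, the DQ based on the family
`ρ_α = φ/α` (index set `I = (0,∞)`) coincides with `DR^φ`; the same holds on `L¹`
for the family `ρ_α = b·E + c·φ/α` with `b ∈ ℝ`, `c > 0`. -/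
theorem stmt_18 {Ω : Type*} [MeasurableSpace Ω] (μ : Measure Ω) [IsProbabilityMeasure μ]
    (hatomless : ∀ s : Set Ω, MeasurableSet s → 0 < μ s →
      ∃ t, t ⊆ s ∧ MeasurableSet t ∧ 0 < μ t ∧ μ t < μ s)
    (n : ℕ) (hn : 0 < n) :
    -- first part: a non-negative risk measure on a convex cone 𝒳
    (∀ 𝒳 : Set (Ω → ℝ),
      (∀ X ∈ 𝒳, ∀ Y ∈ 𝒳, X + Y ∈ 𝒳) →
      (∀ X ∈ 𝒳, ∀ c : ℝ, 0 < c → c • X ∈ 𝒳) →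
      (∀ c : ℝ, (fun _ : Ω => c) ∈ 𝒳) →
      ∀ φ : (Ω → ℝ) → ℝ, (∀ Y ∈ 𝒳, 0 ≤ φ Y) →
      ∀ α : ℝ, 0 < α → ∀ X : Fin n → Ω → ℝ, (∀ i, X i ∈ 𝒳) →
        DQ (⊤ : EReal) (fun β Y => φ Y / β) α X = DR φ X)
    -- second part: 𝒳 = L¹ and ρ_α = b·E + c·φ/α
    ∧ (∀ φ : (Ω → ℝ) → ℝ, (∀ Y : Ω → ℝ, Integrable Y μ → 0 ≤ φ Y) →
      ∀ b c : ℝ, 0 < c →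
      ∀ α : ℝ, 0 < α → ∀ X : Fin n → Ω → ℝ, (∀ i, Integrable (X i) μ) →
        DQ (⊤ : EReal) (fun β Y => b * ∫ ω, Y ω ∂μ + c * (φ Y / β)) α X = DR φ X) :=
  stmt_18_general μ n
end
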